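/- arXiv:2605.26748 — 9 statements merged into one kernel-verified Lean document; each statement's English description precedes it below -/
import Mathlib

section
/- Let A₁ and A₂ be finite abelian homocyclic p-groups of different exponents. If u₁₂ : A₁ → A₂ and u₂₁ : A₂ → A₁ are group homomorphisms, then the composition u₂₁ ∘ u₁₂ : A₁ → A₁ is equal to p · φ for some endomorphism φ of A₁ (i.e., it lies in p·Hom(A₁, A₁)). -/
/-- In `ZMod (p^e)`, an element killed by `p^k` with `k < e` is divisible by `p`. -/
lemma zmod_div_of_pow_smul_eq_zero (p e k : ℕ) (hp : p.Prime) (hk : k < e)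
    (c : ZMod (p ^ e)) (h : (p ^ k) • c = 0) : ∃ d : ZMod (p ^ e), c = p • d := by
  haveI : NeZero (p ^ e) := ⟨pow_ne_zero _ hp.ne_zero⟩
  have hc : ((c.val : ℕ) : ZMod (p ^ e)) = c := ZMod.natCast_zmod_val c
  have h' : ((p ^ k * c.val : ℕ) : ZMod (p ^ e)) = 0 := by
    rw [Nat.cast_mul, hc, ← nsmul_eq_mul, h]
  rw [ZMod.natCast_eq_zero_iff] at h'
  have hdvd : p ^ (e - k) ∣ c.val := by
    have : p ^ k * p ^ (e - k) ∣ p ^ k * c.val := by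
      rwa [← pow_add, Nat.add_sub_cancel' hk.le]
    exact (Nat.mul_dvd_mul_iff_left (pow_pos hp.pos k)).mp this
  have hp1 : p ∣ c.val := dvd_trans (dvd_pow_self p (by omega)) hdvd
  obtain ⟨t, ht⟩ := hp1
  refine ⟨(t : ZMod (p ^ e)), ?_⟩
  rw [← hc, ht, nsmul_eq_mul, Nat.cast_mul]

/-- If an endomorphism of `Fin m → ZMod n` is pointwise divisible by `p`, it is divisible
by `p` as a homomorphism. -/
lemma hom_div_of_pointwise (n m p : ℕ)
    (g : (Fin m → ZMod n) →+ (Fin m → ZMod n))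
    (h : ∀ x, ∃ y, g x = p • y) :
    ∃ ψ : (Fin m → ZMod n) →+ (Fin m → ZMod n), g = p • ψ := by
  choose y hy using fun i : Fin m => h (Pi.single i 1)
  refine ⟨{ toFun := fun x => ∑ i, x i • y i
            map_zero' := by simp
            map_add' := by intro a b; simp [add_smul, Finset.sum_add_distrib] }, ?_⟩
  apply AddMonoidHom.ext; intro x
  have hx : x = ∑ i, Pi.single i (x i) := (Finset.univ_sum_single x).symm
  calc g x = g (∑ i, x i • (Pi.single i 1 : Fin m → ZMod n)) := by
        congr 1
        rw [hx]
        refine Finset.sum_congr rfl fun i _ => ?_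
        funext j
        by_cases hij : i = j <;> simp [Pi.single_apply, hij, smul_eq_mul]
    _ = ∑ i, x i • g (Pi.single i (1 : ZMod n)) := by
        rw [map_sum]
        exact Finset.sum_congr rfl fun i _ => ZMod.map_smul g _ _
    _ = p • ∑ i, x i • y i := by
        rw [Finset.smul_sum]
        exact Finset.sum_congr rfl fun i _ => by rw [hy i, smul_comm]
    _ = _ := rfl

/-- Divisibility by `p` of elements of `A` via a homocyclic decomposition. -/
lemma elem_div (p e m : ℕ) (hp : p.Prime) {A : Type} [AddCommGroup A]
    (σ : A ≃+ (Fin m → ZMod (p ^ e))) (k : ℕ) (hk : k < e)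
    (x : A) (h : (p ^ k) • x = 0) : ∃ y : A, x = p • y := by
  have hσ : ∀ i, ∃ d, σ x i = p • d := fun i => by
    apply zmod_div_of_pow_smul_eq_zero p e k hp hk
    have : σ ((p ^ k) • x) = 0 := by rw [h, map_zero]
    rw [map_nsmul] at this
    have := congrFun this i
    simpa using this
  choose d hd using hσ
  refine ⟨σ.symm d, ?_⟩
  apply σ.injective
  rw [map_nsmul, AddEquiv.apply_symm_apply]
  funext i
  exact (hd i).trans rfl

/-- If `A₁` and `A₂` are finite abelian homocyclic `p`-groups of different
exponents, then for homomorphisms `u₁₂ : A₁ →+ A₂` and `u₂₁ : A₂ →+ A₁` the composition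
`u₂₁ ∘ u₁₂` lies in `p • Hom(A₁, A₁)`. -/
theorem stmt0 (p : ℕ) (hp : p.Prime) (A₁ A₂ : Type)
    [AddCommGroup A₁] [AddCommGroup A₂] [Fintype A₁] [Fintype A₂]
    (e₁ e₂ m₁ m₂ : ℕ)
    (h₁ : Nonempty (A₁ ≃+ (Fin m₁ → ZMod (p ^ e₁))))
    (h₂ : Nonempty (A₂ ≃+ (Fin m₂ → ZMod (p ^ e₂))))
    (hexp₁ : AddMonoid.exponent A₁ = p ^ e₁)
    (hexp₂ : AddMonoid.exponent A₂ = p ^ e₂)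
    (hne : p ^ e₁ ≠ p ^ e₂)
    (u₁₂ : A₁ →+ A₂) (u₂₁ : A₂ →+ A₁) :
    ∃ φ : A₁ →+ A₁, u₂₁.comp u₁₂ = p • φ := by
  obtain ⟨σ₁⟩ := h₁
  obtain ⟨σ₂⟩ := h₂
  have hene : e₁ ≠ e₂ := fun h => hne (by rw [h])
  -- pointwise divisibility of the composition
  have key : ∀ x : A₁, ∃ y : A₁, u₂₁ (u₁₂ x) = p • y := by
    intro x
    rcases lt_or_gt_of_ne hene with hlt | hlt
    · -- e₁ < e₂ : u₁₂ x is killed by p^e₁ in A₂, hence divisible by p there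
      have h0 : (p ^ e₁) • u₁₂ x = 0 := by
        rw [← map_nsmul, ← hexp₁, AddMonoid.exponent_nsmul_eq_zero, map_zero]
      obtain ⟨y₂, hy₂⟩ := elem_div p e₂ m₂ hp σ₂ e₁ hlt _ h0
      exact ⟨u₂₁ y₂, by rw [hy₂, map_nsmul]⟩
    · -- e₂ < e₁ : the composition is killed by p^e₂ with e₂ < e₁
      have h0 : (p ^ e₂) • u₂₁ (u₁₂ x) = 0 := by
        rw [← map_nsmul, ← hexp₂, AddMonoid.exponent_nsmul_eq_zero, map_zero]
      exact elem_div p e₁ m₁ hp σ₁ e₂ hlt _ h0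
  -- transfer to the model and divide the homomorphism
  set g : (Fin m₁ → ZMod (p ^ e₁)) →+ (Fin m₁ → ZMod (p ^ e₁)) :=
    (σ₁.toAddMonoidHom.comp (u₂₁.comp u₁₂)).comp σ₁.symm.toAddMonoidHom with hg
  have hgdiv : ∀ x, ∃ y, g x = p • y := by
    intro x
    obtain ⟨y, hy⟩ := key (σ₁.symm x)
    exact ⟨σ₁ y, by simp [hg, hy, map_nsmul]⟩
  obtain ⟨ψ, hψ⟩ := hom_div_of_pointwise (p ^ e₁) m₁ p g hgdiv
  refine ⟨(σ₁.symm.toAddMonoidHom.comp ψ).comp σ₁.toAddMonoidHom, ?_⟩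
  ext x
  have : g (σ₁ x) = p • ψ (σ₁ x) := by rw [hψ]; rfl
  have hgx : σ₁ (u₂₁ (u₁₂ x)) = p • ψ (σ₁ x) := by
    simpa [hg] using this
  have := congrArg σ₁.symm hgx
  rw [AddEquiv.symm_apply_apply, map_nsmul] at this
  simpa using this
end

section
/- Let A be a finite abelian p-group with a decomposition A = A₁ ⊕ ⋯ ⊕ A_k into homocyclic components of pairwise distinct exponents. Then an endomorphism U of A, written as a k × k matrix (u_ij) with u_ij ∈ Hom(A_i, A_j), is an automorphism of A if and only if each diagonal entry u_ii is an automorphism of A_i for all i = 1, …, k. -/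
open Function Finset

/-- Nakayama-type perturbation: if `f` and `g` differ by a map into `p•A`, and `A` is killed
by `p^E`, then surjectivity of `f` implies surjectivity of `g`. -/
private lemma pert_surj {A : Type} [AddCommGroup A] (p E : ℕ)
    (hkill : ∀ x : A, p ^ E • x = 0) (f g : A →+ A)
    (hfg : ∀ x, ∃ z, f x = g x + p • z)
    (hf : Function.Surjective f) : Function.Surjective g := by
  have key : ∀ t (y : A), ∃ x z, y = g x + p ^ t • z := by
    intro t
    induction t with
    | zero => intro y; exact ⟨0, y, by simp⟩
    | succ t ih =>
      intro y
      obtain ⟨x, z, h⟩ := ih y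
      obtain ⟨x₂, hx₂⟩ := hf z
      obtain ⟨z₂, hz₂⟩ := hfg x₂
      refine ⟨x + p ^ t • x₂, z₂, ?_⟩
      rw [h, ← hx₂, hz₂, map_add, map_nsmul, smul_add, smul_smul, ← pow_succ, add_assoc]
  intro y
  obtain ⟨x, z, h⟩ := key E y
  exact ⟨x, by rw [h, hkill z, add_zero]⟩

private lemma pert_bij {A : Type} [AddCommGroup A] [Fintype A] (p E : ℕ)
    (hkill : ∀ x : A, p ^ E • x = 0) (f g : A →+ A)
    (hfg : ∀ x, ∃ z, f x = g x + p • z) :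
    (Function.Bijective f ↔ Function.Bijective g) := by
  have hgf : ∀ x, ∃ z, g x = f x + p • z := by
    intro x
    obtain ⟨z, hz⟩ := hfg x
    exact ⟨-z, by rw [hz, smul_neg]; abel⟩
  rw [← Finite.surjective_iff_bijective, ← Finite.surjective_iff_bijective]
  exact ⟨pert_surj p E hkill f g hfg, pert_surj p E hkill g f hgf⟩

/-- In `ZMod (p^n)`, an element killed by `p^c` is a multiple of `p^(n-c)`. -/
private lemma zmod_pull (p : ℕ) (hp : 0 < p) (n c : ℕ) (hc : c ≤ n) (z : ZMod (p ^ n))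
    (h : p ^ c • z = 0) : ∃ w, z = p ^ (n - c) • w := by
  haveI : NeZero (p ^ n) := ⟨pow_ne_zero n hp.ne'⟩
  have hz : ((z.val : ℕ) : ZMod (p ^ n)) = z := ZMod.natCast_zmod_val z
  have h2 : ((p ^ c * z.val : ℕ) : ZMod (p ^ n)) = 0 := by
    rw [Nat.cast_mul, hz, ← nsmul_eq_mul, h]
  rw [ZMod.natCast_eq_zero_iff] at h2
  have h3 : p ^ (n - c) ∣ z.val := by
    have h2' : p ^ c * p ^ (n - c) ∣ p ^ c * z.val := by
      rw [← pow_add, Nat.add_sub_cancel' hc]; exact h2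
    exact (Nat.mul_dvd_mul_iff_left (pow_pos hp c)).mp h2'
  obtain ⟨q, hq⟩ := h3
  refine ⟨(q : ZMod (p ^ n)), ?_⟩
  rw [← hz, hq]
  push_cast
  rw [nsmul_eq_mul]
  push_cast
  ring

open Function Finset

private lemma maxdiag (p : ℕ) (ι : Type) [Fintype ι] [DecidableEq ι]
    (A : ι → Type) [∀ i, AddCommGroup (A i)] [∀ i, Fintype (A i)]
    (e : ι → ℕ)
    (hkill : ∀ i (x : A i), p ^ e i • x = 0)
    (hhom : ∀ i (c : ℕ) (x : A i), c ≤ e i → p ^ c • x = 0 → ∃ y : A i, x = p ^ (e i - c) • y)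
    (hinj : ∀ i j, i ≠ j → e i ≠ e j)
    (i₀ : ι) (hmax : ∀ i, e i ≤ e i₀)
    (u : ∀ i j, A i →+ A j)
    (hF : Function.Injective (fun x : (∀ i, A i) => fun j => ∑ i, u i j (x i))) :
    Function.Bijective (u i₀ i₀) := by
  rw [← Finite.injective_iff_bijective]
  suffices hker : ∀ x : A i₀, u i₀ i₀ x = 0 → x = 0 by
    intro a b hab
    have h1 : u i₀ i₀ (a - b) = 0 := by rw [map_sub, hab, sub_self]
    exact sub_eq_zero.mp (hker _ h1)
  intro x hx
  by_contra hx0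
  have hex : ∃ nn, p ^ nn • x = 0 := ⟨e i₀, hkill i₀ x⟩
  classical
  have hnn : p ^ (Nat.find hex) • x = 0 := Nat.find_spec hex
  set nn := Nat.find hex with hnndef
  have hnpos : 1 ≤ nn := by
    rcases Nat.eq_zero_or_pos nn with h | h
    · exfalso; apply hx0; rw [h, pow_zero, one_smul] at hnn; exact hnn
    · exact h
  set x' := p ^ (nn - 1) • x with hx'
  have hx'0 : x' ≠ 0 := Nat.find_min hex (by omega)
  have hpx' : p ^ 1 • x' = 0 := by
    rw [hx', smul_smul, ← pow_add]
    have h1 : 1 + (nn - 1) = nn := by omega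
    rw [h1, hnn]
  have he1 : 1 ≤ e i₀ := by
    by_contra h
    apply hx0
    have h2 := hkill i₀ x
    have h0 : e i₀ = 0 := by omega
    rw [h0, pow_zero, one_smul] at h2
    exact h2
  obtain ⟨y, hy⟩ := hhom i₀ 1 x' he1 hpx'
  have hFX : (fun j => ∑ i, u i j (Pi.single i₀ x' i)) = (fun j => ∑ i, u i j ((0 : ∀ i, A i) i)) := by
    funext j
    have hsum : ∑ i, u i j (Pi.single i₀ x' i) = u i₀ j x' := by
      rw [Finset.sum_eq_single i₀]
      · rw [Pi.single_eq_same]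
      · intro i _ hi; rw [Pi.single_eq_of_ne hi, map_zero]
      · intro h; exact absurd (Finset.mem_univ i₀) h
    have hz : ∑ i, u i j ((0 : ∀ i, A i) i) = 0 := by simp
    rw [hsum, hz]
    by_cases hj : j = i₀
    · subst hj
      rw [hx', map_nsmul, hx, smul_zero]
    · have hlt : e j < e i₀ := lt_of_le_of_ne (hmax j) (hinj j i₀ hj)
      rw [hy, map_nsmul]
      have h3 : p ^ (e i₀ - 1) • (u i₀ j y) = p ^ (e i₀ - 1 - e j) • (p ^ (e j) • u i₀ j y) := by
        rw [smul_smul, ← pow_add]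
        congr 2
        omega
      rw [h3, hkill j, smul_zero]
  have hX0 := hF hFX
  apply hx'0
  have h4 := congrFun hX0 i₀
  rwa [Pi.single_eq_same] at h4
private lemma schur (p : ℕ) (ι : Type) [Fintype ι] [DecidableEq ι]
    (A : ι → Type) [∀ i, AddCommGroup (A i)] [∀ i, Fintype (A i)]
    (e : ι → ℕ)
    (hkill : ∀ i (x : A i), p ^ e i • x = 0)
    (hhom : ∀ i (c : ℕ) (x : A i), c ≤ e i → p ^ c • x = 0 → ∃ y : A i, x = p ^ (e i - c) • y)
    (hinj : ∀ i j, i ≠ j → e i ≠ e j)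
    (i₀ : ι) (hmax : ∀ i, e i ≤ e i₀)
    (u : ∀ i j, A i →+ A j)
    (hd : Function.Bijective (u i₀ i₀))
    (IH : ∀ u' : ∀ i j : {i : ι // i ≠ i₀}, A i.1 →+ A j.1,
      (Function.Bijective
          (fun y : (∀ i : {i : ι // i ≠ i₀}, A i.1) => fun j => ∑ i, u' i j (y i)) ↔
        ∀ i, Function.Bijective (u' i i))) :
    Function.Bijective (fun x : (∀ i, A i) => fun j => ∑ i, u i j (x i)) ↔
      ∀ i, Function.Bijective (u i i) := by
  classical
  -- inverse of the corner entry
  let dE := AddEquiv.ofBijective (u i₀ i₀) hd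
  let d' : A i₀ →+ A i₀ := dE.symm.toAddMonoidHom
  have hdd' : ∀ x, u i₀ i₀ (d' x) = x := fun x => dE.apply_symm_apply x
  -- the corrected (Schur complement) matrix
  let w : ∀ i j, A i →+ A j := fun i j => u i j - (u i₀ j).comp (d'.comp (u i i₀))
  have hw : ∀ i j x, w i j x = u i j x - u i₀ j (d' (u i i₀ x)) := fun _ _ _ => rfl
  -- the correction is divisible by p off the corner row/column
  have hcorr : ∀ (i : ι), i ≠ i₀ → ∀ (j : ι) (x : A i), ∃ z : A j,
      u i₀ j (d' (u i i₀ x)) = p • z := by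
    intro i hi j x
    have h1 : p ^ e i • (u i i₀ x) = 0 := by rw [← map_nsmul, hkill i x, map_zero]
    have hlt : e i < e i₀ := lt_of_le_of_ne (hmax i) (hinj i i₀ hi)
    obtain ⟨y, hy⟩ := hhom i₀ (e i) (u i i₀ x) hlt.le h1
    refine ⟨p ^ (e i₀ - e i - 1) • u i₀ j (d' y), ?_⟩
    have hps : p * p ^ (e i₀ - e i - 1) = p ^ (e i₀ - e i) := by
      rw [← pow_succ']
      congr 1
      omega
    rw [hy, map_nsmul, map_nsmul, smul_smul, hps]
  -- diagonal entries of the corrected matrix are bijective iff the original ones are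
  have hdiag : ∀ (i : ι), i ≠ i₀ → (Function.Bijective (u i i) ↔ Function.Bijective (w i i)) := by
    intro i hi
    refine pert_bij p (e i) (hkill i) (u i i) (w i i) ?_
    intro x
    obtain ⟨z, hz⟩ := hcorr i hi i x
    refine ⟨z, ?_⟩
    have h2 : w i i x = u i i x - p • z := by rw [hw, hz]
    rw [h2]; abel
  -- the shear
  let t : (∀ i, A i) → A i₀ := fun x => d' (∑ i ∈ Finset.univ.erase i₀, u i i₀ (x i))
  have htcong : ∀ x y : ∀ i, A i, (∀ i, i ≠ i₀ → x i = y i) → t x = t y := by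
    intro x y h
    show d' _ = d' _
    congr 1
    exact Finset.sum_congr rfl fun i hi => by rw [h i (Finset.ne_of_mem_erase hi)]
  let S : (∀ i, A i) → (∀ i, A i) := fun x => Function.update x i₀ (x i₀ + t x)
  have hSne : ∀ (x : ∀ i, A i) (j : ι), j ≠ i₀ → S x j = x j := fun x j h =>
    Function.update_of_ne h _ x
  have hSi₀ : ∀ x : ∀ i, A i, S x i₀ = x i₀ + t x := fun x => Function.update_self _ _ _
  have hSbij : Function.Bijective S := by
    apply Function.bijective_iff_has_inverse.mpr
    refine ⟨fun x => Function.update x i₀ (x i₀ - t x), ?_, ?_⟩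
    · intro x
      funext j
      show Function.update (S x) i₀ (S x i₀ - t (S x)) j = x j
      by_cases h : j = i₀
      · rw [h, Function.update_self, htcong (S x) x (fun i hi => hSne x i hi), hSi₀]
        abel
      · rw [Function.update_of_ne h, hSne x j h]
    · intro x
      set y := Function.update x i₀ (x i₀ - t x) with hy
      have hyne : ∀ j, j ≠ i₀ → y j = x j := fun j h => Function.update_of_ne h _ x
      have hyi₀ : y i₀ = x i₀ - t x := Function.update_self _ _ _
      funext j
      show Function.update y i₀ (y i₀ + t y) j = x j
      by_cases h : j = i₀
      · rw [h, Function.update_self, htcong y x hyne, hyi₀]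
        abel
      · rw [Function.update_of_ne h, hyne j h]
  -- the block-triangular map
  let H : (∀ i, A i) → (∀ i, A i) := fun y =>
    Function.update (fun j => (∑ i ∈ Finset.univ.erase i₀, w i j (y i)) + u i₀ j (y i₀)) i₀
      (u i₀ i₀ (y i₀))
  have hHi₀ : ∀ y : ∀ i, A i, H y i₀ = u i₀ i₀ (y i₀) := fun y => Function.update_self _ _ _
  have hHne : ∀ (y : ∀ i, A i) (j : ι), j ≠ i₀ →
      H y j = (∑ i ∈ Finset.univ.erase i₀, w i j (y i)) + u i₀ j (y i₀) := fun y j h =>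
    Function.update_of_ne h _ _
  -- F = H ∘ S
  have hFHS : (fun x : (∀ i, A i) => fun j => ∑ i, u i j (x i)) = H ∘ S := by
    funext x j
    show ∑ i, u i j (x i) = H (S x) j
    by_cases hj : j = i₀
    · rw [hj]
      rw [hHi₀, hSi₀, map_add, show t x = d' (∑ i ∈ Finset.univ.erase i₀, u i i₀ (x i)) from rfl,
        hdd', ← Finset.add_sum_erase Finset.univ (fun i => u i i₀ (x i)) (Finset.mem_univ i₀)]
    · rw [hHne _ _ hj]
      have hSx : ∀ i ∈ Finset.univ.erase i₀,
          w i j (S x i) = u i j (x i) - u i₀ j (d' (u i i₀ (x i))) := fun i hi => by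
        rw [hSne x i (Finset.ne_of_mem_erase hi)]
        exact hw i j (x i)
      rw [Finset.sum_congr rfl hSx, hSi₀, map_add]
      have hts : u i₀ j (t x) = ∑ i ∈ Finset.univ.erase i₀, u i₀ j (d' (u i i₀ (x i))) := by
        show u i₀ j (d' _) = _
        rw [map_sum, map_sum]
      rw [hts, Finset.sum_sub_distrib,
        ← Finset.add_sum_erase Finset.univ (fun i => u i j (x i)) (Finset.mem_univ i₀)]
      abel
  -- extension and restriction
  let ext : (∀ i : {i : ι // i ≠ i₀}, A i.1) → (∀ i, A i) := fun y j =>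
    if h : j = i₀ then 0 else y ⟨j, h⟩
  have hexti₀ : ∀ y, ext y i₀ = 0 := fun y => dif_pos rfl
  have hexty : ∀ (y) (i : {i : ι // i ≠ i₀}), ext y i.1 = y i := fun y i => dif_neg i.2
  let F' : (∀ i : {i : ι // i ≠ i₀}, A i.1) → (∀ i : {i : ι // i ≠ i₀}, A i.1) :=
    fun y j => ∑ i, w i.1 j.1 (y i)
  have hsub : ∀ (j : ι) (g : ∀ i, A i),
      (∑ i : {i : ι // i ≠ i₀}, w i.1 j (g i.1)) = ∑ i ∈ Finset.univ.erase i₀, w i j (g i) := by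
    intro j g
    exact (Finset.sum_subtype (Finset.univ.erase i₀)
      (fun i => by simp [Finset.mem_erase]) (fun i => w i j (g i))).symm
  -- H bijective ↔ F' bijective
  have hHF' : Function.Bijective H ↔ Function.Bijective F' := by
    rw [← Finite.injective_iff_bijective, ← Finite.injective_iff_bijective]
    have hkey : ∀ y, H (ext y) = ext (F' y) := by
      intro y
      funext j
      by_cases hj : j = i₀
      · subst hj
        rw [hHi₀, hexti₀, map_zero, hexti₀]
      · rw [hHne _ _ hj, hexti₀, map_zero, add_zero,
          show ext (F' y) j = F' y ⟨j, hj⟩ from dif_neg hj]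
        show _ = ∑ i : {i : ι // i ≠ i₀}, w i.1 j (y i)
        rw [← hsub j (ext y)]
        exact Finset.sum_congr rfl fun i _ => by rw [hexty]
    constructor
    · intro hH y y' hyy'
      have h1 : H (ext y) = H (ext y') := by rw [hkey, hkey, hyy']
      have h2 := hH h1
      funext i
      have h3 := congrFun h2 i.1
      rwa [hexty, hexty] at h3
    · intro hF' a b hab
      have h0 : a i₀ = b i₀ := hd.injective (by
        have h1 := congrFun hab i₀
        rwa [hHi₀, hHi₀] at h1)
      have hres : F' (fun i => a i.1) = F' (fun i => b i.1) := by
        funext j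
        have hj := congrFun hab j.1
        rw [hHne _ _ j.2, hHne _ _ j.2, h0] at hj
        have hsum := add_right_cancel hj
        show ∑ i : {i : ι // i ≠ i₀}, w i.1 j.1 (a i.1) = ∑ i : {i : ι // i ≠ i₀}, w i.1 j.1 (b i.1)
        rw [hsub j.1 a, hsub j.1 b]
        exact hsum
      have h2 := hF' hres
      funext j
      by_cases hj : j = i₀
      · subst hj; exact h0
      · exact congrFun h2 ⟨j, hj⟩
  -- assemble
  constructor
  · intro hF
    rw [hFHS] at hF
    have hH := (Function.Bijective.of_comp_iff H hSbij).mp hF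
    have hF' := hHF'.mp hH
    have hww := (IH (fun i j => w i.1 j.1)).mp hF'
    intro i
    by_cases hi : i = i₀
    · subst hi; exact hd
    · exact (hdiag i hi).mpr (hww ⟨i, hi⟩)
  · intro hu
    have hww : ∀ i : {i : ι // i ≠ i₀}, Function.Bijective (w i.1 i.1) := fun i =>
      (hdiag i.1 i.2).mp (hu i.1)
    have hF' : Function.Bijective F' := (IH (fun i j => w i.1 j.1)).mpr hww
    have hH : Function.Bijective H := hHF'.mpr hF'
    rw [hFHS]
    exact (Function.Bijective.of_comp_iff H hSbij).mpr hH

private lemma auxmain (p : ℕ) (hp : 0 < p) :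
    ∀ (n : ℕ) (ι : Type) [Fintype ι] [DecidableEq ι], Fintype.card ι ≤ n →
      ∀ (A : ι → Type) [∀ i, AddCommGroup (A i)] [∀ i, Fintype (A i)] (e : ι → ℕ),
        (∀ i (x : A i), p ^ e i • x = 0) →
        (∀ i (c : ℕ) (x : A i), c ≤ e i → p ^ c • x = 0 → ∃ y : A i, x = p ^ (e i - c) • y) →
        (∀ i j, i ≠ j → e i ≠ e j) →
        ∀ u : ∀ i j, A i →+ A j,
          (Function.Bijective (fun x : (∀ i, A i) => fun j => ∑ i, u i j (x i)) ↔
            ∀ i, Function.Bijective (u i i)) := by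
  intro n
  induction n with
  | zero =>
    intro ι _ _ hcard A _ _ e _ _ _ u
    haveI : IsEmpty ι := Fintype.card_eq_zero_iff.mp (Nat.le_zero.mp hcard)
    exact iff_of_true
      ⟨fun a b _ => funext fun i => isEmptyElim i, fun y => ⟨y, funext fun i => isEmptyElim i⟩⟩
      (fun i => isEmptyElim i)
  | succ n ih =>
    intro ι _ _ hcard A _ _ e hkill hhom hinj u
    rcases isEmpty_or_nonempty ι with hE | hN
    · exact iff_of_true
        ⟨fun a b _ => funext fun i => isEmptyElim i, fun y => ⟨y, funext fun i => isEmptyElim i⟩⟩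
        (fun i => isEmptyElim i)
    · obtain ⟨i₀, hmax⟩ := Finite.exists_max e
      have hcard' : Fintype.card {i : ι // i ≠ i₀} ≤ n := by
        have h1 : Fintype.card {i : ι // i ≠ i₀} < Fintype.card ι :=
          Fintype.card_subtype_lt (x := i₀) (by simp)
        omega
      have IH : ∀ u' : ∀ i j : {i : ι // i ≠ i₀}, A i.1 →+ A j.1,
          (Function.Bijective
              (fun y : (∀ i : {i : ι // i ≠ i₀}, A i.1) => fun j => ∑ i, u' i j (y i)) ↔
            ∀ i, Function.Bijective (u' i i)) := fun u' =>
        ih {i : ι // i ≠ i₀} hcard' (fun i => A i.1) (fun i => e i.1)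
          (fun i x => hkill i.1 x) (fun i c x hc h => hhom i.1 c x hc h)
          (fun i j hij => hinj i.1 j.1 (fun h => hij (Subtype.ext h))) u'
      constructor
      · intro hF
        exact (schur p ι A e hkill hhom hinj i₀ hmax u
          (maxdiag p ι A e hkill hhom hinj i₀ hmax u hF.injective) IH).mp hF
      · intro hu
        exact (schur p ι A e hkill hhom hinj i₀ hmax u (hu i₀) IH).mpr hu

/-- Let `A = A₁ ⊕ ⋯ ⊕ A_k` be a finite abelian `p`-group with homocyclic
components `A i` of pairwise distinct exponents `p ^ e i`. An endomorphism of `A` given by a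
matrix `(u i j)` of homomorphisms `u i j : A i →+ A j` is an automorphism if and only if every
diagonal entry `u i i` is an automorphism of `A i`. -/
theorem stmt3 (p : ℕ) (hp : p.Prime) (k : ℕ) (A : Fin k → Type)
    [∀ i, AddCommGroup (A i)] [∀ i, Fintype (A i)]
    (e m : Fin k → ℕ)
    (hA : ∀ i, Nonempty (A i ≃+ (Fin (m i) → ZMod (p ^ e i))))
    (hexp : ∀ i, AddMonoid.exponent (A i) = p ^ e i)
    (hdist : ∀ i j, i ≠ j → e i ≠ e j)
    (u : ∀ i j, A i →+ A j) :
    Function.Bijective (fun x : (∀ i, A i) => fun j => ∑ i, u i j (x i)) ↔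
      ∀ i, Function.Bijective (u i i) := by
  have hkill : ∀ i (x : A i), p ^ e i • x = 0 := by
    intro i x
    obtain ⟨φ⟩ := hA i
    apply φ.injective
    rw [map_nsmul, map_zero]
    funext j
    rw [Pi.smul_apply, Pi.zero_apply, nsmul_eq_mul, Nat.cast_pow]
    rw [show ((p : ZMod (p ^ e i)) ^ e i) = ((p ^ e i : ℕ) : ZMod (p ^ e i)) by push_cast; ring]
    rw [ZMod.natCast_self, zero_mul]
  have hhom : ∀ i (c : ℕ) (x : A i), c ≤ e i → p ^ c • x = 0 →
      ∃ y : A i, x = p ^ (e i - c) • y := by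
    intro i c x hc h
    obtain ⟨φ⟩ := hA i
    have h' : p ^ c • φ x = 0 := by rw [← map_nsmul, h, map_zero]
    have hcomp : ∀ j, ∃ w, φ x j = p ^ (e i - c) • w := by
      intro j
      refine zmod_pull p hp.pos (e i) c hc (φ x j) ?_
      have h1 := congrFun h' j
      rwa [Pi.smul_apply, Pi.zero_apply] at h1
    choose wf hwf using hcomp
    refine ⟨φ.symm wf, ?_⟩
    apply φ.injective
    rw [map_nsmul, AddEquiv.apply_symm_apply]
    funext j
    rw [Pi.smul_apply]
    exact hwf j
  exact auxmain p hp.pos k (Fin k) (Fintype.card_fin k).le A e hkill hhom hdist u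
end

section
/- Let A be a finite abelian p-group with decomposition A = A₁ ⊕ ⋯ ⊕ A_k into homocyclic components of pairwise distinct exponents. Then the map Λ : End(A) → End(A₁/pA₁) ⊕ ⋯ ⊕ End(A_k/pA_k), sending an endomorphism U = (u_ij) to the tuple of endomorphisms induced by the diagonal entries u_ii on A_i/pA_i, is a surjective ring homomorphism. -/
def pSub (p : ℕ) (A : Type) [AddCommGroup A] : AddSubgroup A :=
  AddMonoidHom.range (p • AddMonoidHom.id A)

lemma mem_pSub_iff {p : ℕ} {A : Type} [AddCommGroup A] {x : A} :
    x ∈ pSub p A ↔ ∃ a, p • a = x := by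
  simp [pSub, AddMonoidHom.mem_range]

lemma nsmul_mod_smul {B : Type} [AddCommGroup B] {t : ℕ} {c : B} (h : t • c = 0) (n : ℕ) :
    n • c = (n % t) • c := by
  conv_lhs => rw [← Nat.mod_add_div n t]
  rw [add_nsmul, mul_comm, mul_nsmul, smul_comm, h, smul_zero, add_zero]

lemma zmod_dvd {p e d : ℕ} (hp : p.Prime) (hd : d < e) (z : ZMod (p ^ e))
    (hz : p ^ d • z = 0) : ∃ w : ZMod (p ^ e), z = p * w := by
  haveI : NeZero (p ^ e) := ⟨pow_ne_zero e hp.ne_zero⟩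
  have h1 : ((p ^ d * z.val : ℕ) : ZMod (p ^ e)) = 0 := by
    push_cast
    rw [ZMod.natCast_val, ZMod.cast_id]
    rw [nsmul_eq_mul] at hz
    push_cast at hz
    exact hz
  have h2 : p ^ e ∣ p ^ d * z.val := (ZMod.natCast_eq_zero_iff _ _).mp h1
  have h3 : p ^ d * p ∣ p ^ d * z.val := dvd_trans (by rw [← pow_succ]; exact pow_dvd_pow p hd) h2
  have h4 : p ∣ z.val := (mul_dvd_mul_iff_left (pow_ne_zero d hp.ne_zero)).mp h3
  obtain ⟨w, hw⟩ := h4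
  refine ⟨(w : ZMod (p ^ e)), ?_⟩
  have hz2 : ((z.val : ℕ) : ZMod (p ^ e)) = z := ZMod.natCast_rightInverse z
  conv_lhs => rw [← hz2, hw]
  push_cast
  ring

lemma mem_pSub_of_nsmul {p e d mm : ℕ} (hp : p.Prime) (hd : d < e)
    {B : Type} [AddCommGroup B] (σ : B ≃+ (Fin mm → ZMod (p ^ e)))
    (y : B) (hy : p ^ d • y = 0) : y ∈ pSub p B := by
  have hz : ∀ j, p ^ d • (σ y j) = 0 := by
    intro j
    have := congrArg σ hy
    rw [map_nsmul, map_zero] at this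
    exact congrFun this j
  choose w hw using fun j => zmod_dvd hp hd (σ y j) (hz j)
  rw [mem_pSub_iff]
  refine ⟨σ.symm w, ?_⟩
  apply σ.injective
  rw [map_nsmul, AddEquiv.apply_symm_apply]
  funext j
  simp [hw j, nsmul_eq_mul]

lemma model_exp_smul {p e mm : ℕ} {B : Type} [AddCommGroup B]
    (σ : B ≃+ (Fin mm → ZMod (p ^ e))) (x : B) : p ^ e • x = 0 := by
  apply σ.injective
  rw [map_nsmul, map_zero]
  funext j
  simp [nsmul_eq_mul]

lemma comp_mem_pSub {p : ℕ} (hp : p.Prime) {ei ej mi mj : ℕ} (hne : ei ≠ ej)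
    {Ai Aj : Type} [AddCommGroup Ai] [AddCommGroup Aj]
    (σi : Ai ≃+ (Fin mi → ZMod (p ^ ei))) (σj : Aj ≃+ (Fin mj → ZMod (p ^ ej)))
    (f : Ai →+ Aj) (g : Aj →+ Ai) (x : Ai) : g (f x) ∈ pSub p Ai := by
  rcases lt_or_gt_of_ne hne with h | h
  · have h1 : p ^ ei • f x = 0 := by
      rw [← map_nsmul, model_exp_smul σi, map_zero]
    have h2 : f x ∈ pSub p Aj := mem_pSub_of_nsmul hp h σj _ h1
    rw [mem_pSub_iff] at h2 ⊢
    obtain ⟨a, ha⟩ := h2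
    exact ⟨g a, by rw [← map_nsmul, ha]⟩
  · have h1 : p ^ ej • g (f x) = 0 := by
      rw [← map_nsmul, model_exp_smul σj, map_zero]
    exact mem_pSub_of_nsmul hp h σi _ h1

lemma exists_lift {p e mm : ℕ} (hp : p.Prime) {B : Type} [AddCommGroup B]
    (σ : B ≃+ (Fin mm → ZMod (p ^ e)))
    (φ : AddMonoid.End (B ⧸ pSub p B)) :
    ∃ ψ : B →+ B, ∀ x : B,
      (QuotientAddGroup.mk (ψ x) : B ⧸ pSub p B) = φ (QuotientAddGroup.mk x) := by
  haveI : NeZero (p ^ e) := ⟨pow_ne_zero e hp.ne_zero⟩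
  have hlift : ∀ j : Fin mm, ∃ c : B,
      (QuotientAddGroup.mk c : B ⧸ pSub p B)
        = φ (QuotientAddGroup.mk (σ.symm (Pi.single j 1))) := fun j =>
    QuotientAddGroup.mk_surjective _
  choose c hc using hlift
  have hexp : ∀ b : B, p ^ e • b = 0 := model_exp_smul σ
  have hval : ∀ (a b : ZMod (p ^ e)) (x : B), (a + b).val • x = a.val • x + b.val • x := by
    intro a b x
    rw [ZMod.val_add, ← nsmul_mod_smul (hexp x), add_nsmul]
  refine ⟨{ toFun := fun x => ∑ j, (σ x j).val • c j, map_zero' := ?_, map_add' := ?_ }, ?_⟩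
  · simp
  · intro x y
    show ∑ j, (σ (x + y) j).val • c j = ∑ j, (σ x j).val • c j + ∑ j, (σ y j).val • c j
    rw [← Finset.sum_add_distrib]
    apply Finset.sum_congr rfl
    intro j _
    rw [map_add, Pi.add_apply, hval]
  · intro x
    have key : ∑ j, (σ x j).val • σ.symm (Pi.single j 1) = x := by
      apply σ.injective
      rw [map_sum]
      simp only [map_nsmul, AddEquiv.apply_symm_apply]
      funext t
      rw [Finset.sum_apply]
      rw [Finset.sum_eq_single t]
      · simp [nsmul_eq_mul, ZMod.natCast_val, ZMod.cast_id]
      · intro j _ hj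
        simp [Pi.single_apply, hj.symm]
      · simp
    simp only [AddMonoidHom.coe_mk, ZeroHom.coe_mk]
    calc (QuotientAddGroup.mk (∑ j, (σ x j).val • c j) : B ⧸ pSub p B)
        = ∑ j, (σ x j).val • (QuotientAddGroup.mk (c j) : B ⧸ pSub p B) := by
          rw [QuotientAddGroup.mk_sum]
          simp [QuotientAddGroup.mk_nsmul]
      _ = ∑ j, (σ x j).val • φ (QuotientAddGroup.mk (σ.symm (Pi.single j 1))) := by
          simp only [hc]
      _ = φ (QuotientAddGroup.mk (∑ j, (σ x j).val • σ.symm (Pi.single j 1))) := by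
          rw [QuotientAddGroup.mk_sum, map_sum]
          simp [QuotientAddGroup.mk_nsmul]
      _ = φ (QuotientAddGroup.mk x) := by rw [key]

/-- Let `A = A₁ ⊕ ⋯ ⊕ A_k` be a finite abelian `p`-group with homocyclic
components of pairwise distinct exponents. The map
`Λ : End(A) → End(A₁/pA₁) ⊕ ⋯ ⊕ End(A_k/pA_k)` sending an endomorphism `U` to the tuple of
endomorphisms induced on `A i / pA i` by its diagonal entries `x ↦ U (single i x) i` is a
surjective ring homomorphism. -/
theorem stmt4 (p : ℕ) (hp : p.Prime) (k : ℕ) (A : Fin k → Type)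
    [∀ i, AddCommGroup (A i)] [∀ i, Fintype (A i)]
    (e m : Fin k → ℕ)
    (hA : ∀ i, Nonempty (A i ≃+ (Fin (m i) → ZMod (p ^ e i))))
    (hexp : ∀ i, AddMonoid.exponent (A i) = p ^ e i)
    (hdist : ∀ i j, i ≠ j → e i ≠ e j) :
    ∃ Λ : AddMonoid.End (∀ i, A i) →+* (∀ i, AddMonoid.End (A i ⧸ pSub p (A i))),
      (∀ (U : AddMonoid.End (∀ i, A i)) (i : Fin k) (x : A i),
        Λ U i ((QuotientAddGroup.mk x : A i ⧸ pSub p (A i))) =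
          (QuotientAddGroup.mk (U (Pi.single i x) i) : A i ⧸ pSub p (A i))) ∧
      Function.Surjective Λ := by
  classical
  set σ : ∀ i, A i ≃+ (Fin (m i) → ZMod (p ^ e i)) := fun i => (hA i).some with hσ
  -- diagonal entry as an AddMonoidHom
  set D : AddMonoid.End (∀ i, A i) → ∀ i : Fin k, A i →+ A i := fun U i =>
    (Pi.evalAddMonoidHom A i).comp (AddMonoidHom.comp U (AddMonoidHom.single A i)) with hDdef
  have hD : ∀ U (i : Fin k) (x : A i), D U i x = U (Pi.single i x) i := fun U i x => rfl
  have hcond : ∀ U (i : Fin k), pSub p (A i) ≤ (pSub p (A i)).comap (D U i) := by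
    intro U i y hy
    rw [mem_pSub_iff] at hy
    obtain ⟨a, ha⟩ := hy
    rw [AddSubgroup.mem_comap, mem_pSub_iff]
    exact ⟨D U i a, by rw [← map_nsmul, ha]⟩
  set Λfun : AddMonoid.End (∀ i, A i) → ∀ i, AddMonoid.End (A i ⧸ pSub p (A i)) :=
    fun U i => QuotientAddGroup.map (pSub p (A i)) (pSub p (A i)) (D U i) (hcond U i) with hΛfun
  have hkey : ∀ U (i : Fin k) (x : A i),
      Λfun U i (QuotientAddGroup.mk x) = QuotientAddGroup.mk (U (Pi.single i x) i) := by
    intro U i x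
    simp only [hΛfun]
    exact QuotientAddGroup.map_mk _ _ _ _ _
  have hext : ∀ (i : Fin k) (f g : AddMonoid.End (A i ⧸ pSub p (A i))),
      (∀ x : A i, f (QuotientAddGroup.mk x) = g (QuotientAddGroup.mk x)) → f = g := by
    intro i f g h
    refine AddMonoidHom.ext fun z => ?_
    obtain ⟨x, rfl⟩ := QuotientAddGroup.mk_surjective z
    exact h x
  -- the off-diagonal vanishing for multiplicativity
  have hoff : ∀ (U : AddMonoid.End (∀ i, A i)) (i : Fin k) (w : ∀ i, A i),
      (QuotientAddGroup.mk (U w i) : A i ⧸ pSub p (A i)) =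
        QuotientAddGroup.mk (U (Pi.single i (w i)) i) +
          QuotientAddGroup.mk (∑ j ∈ Finset.univ.erase i, U (Pi.single j (w j)) i) := by
    intro U i w
    rw [← QuotientAddGroup.mk_add]
    congr 1
    have hw : w = Pi.single i (w i) + ∑ j ∈ Finset.univ.erase i, Pi.single j (w j) := by
      rw [Finset.add_sum_erase _ (fun j => Pi.single j (w j)) (Finset.mem_univ i), Finset.univ_sum_single]
    conv_lhs => rw [hw]
    rw [map_add, Pi.add_apply, map_sum, Finset.sum_apply]
  have hoffmk : ∀ (U V : AddMonoid.End (∀ i, A i)) (i : Fin k) (x : A i),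
      (QuotientAddGroup.mk (U (V (Pi.single i x)) i) : A i ⧸ pSub p (A i)) =
        QuotientAddGroup.mk (U (Pi.single i (V (Pi.single i x) i)) i) := by
    intro U V i x
    rw [hoff U i (V (Pi.single i x))]
    have hz : (QuotientAddGroup.mk (∑ j ∈ Finset.univ.erase i,
        U (Pi.single j (V (Pi.single i x) j)) i) : A i ⧸ pSub p (A i)) = 0 := by
      rw [QuotientAddGroup.eq_zero_iff]
      apply AddSubgroup.sum_mem
      intro j hj
      have hij : i ≠ j := (Finset.ne_of_mem_erase hj).symm
      exact comp_mem_pSub hp (hdist i j hij) (σ i) (σ j)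
        ((Pi.evalAddMonoidHom A j).comp (AddMonoidHom.comp V (AddMonoidHom.single A i)))
        ((Pi.evalAddMonoidHom A i).comp (AddMonoidHom.comp U (AddMonoidHom.single A j))) x
    rw [hz, add_zero]
  refine ⟨{ toFun := Λfun,
            map_one' := ?_, map_mul' := ?_, map_zero' := ?_, map_add' := ?_ }, ?_, ?_⟩
  · funext i
    apply hext
    intro x
    rw [hkey]
    show _ = (1 : AddMonoid.End (A i ⧸ pSub p (A i))) (QuotientAddGroup.mk x)
    simp [Pi.single_eq_same]
  · intro U V
    funext i
    apply hext
    intro x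
    rw [hkey]
    have h1 : (U * V) (Pi.single i x) = U (V (Pi.single i x)) := rfl
    rw [h1, hoffmk U V i x]
    show _ = Λfun U i (Λfun V i (QuotientAddGroup.mk x))
    rw [hkey V i x, hkey U i _]
  · funext i
    apply hext
    intro x
    rw [hkey]
    show _ = (0 : AddMonoid.End (A i ⧸ pSub p (A i))) (QuotientAddGroup.mk x)
    simp
  · intro U V
    funext i
    apply hext
    intro x
    rw [hkey]
    show (QuotientAddGroup.mk (U (Pi.single i x) i + V (Pi.single i x) i) : A i ⧸ pSub p (A i))
      = Λfun U i (QuotientAddGroup.mk x) + Λfun V i (QuotientAddGroup.mk x)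
    rw [QuotientAddGroup.mk_add, hkey, hkey]
  · intro U i x
    exact hkey U i x
  · intro Φ
    choose ψ hψ using fun i => exists_lift hp (σ i) (Φ i)
    set U' : AddMonoid.End (∀ i, A i) :=
      { toFun := fun w i => ψ i (w i),
        map_zero' := by funext i; simp,
        map_add' := by intro a b; funext i; simp } with hU'
    refine ⟨U', ?_⟩
    funext i
    apply hext
    intro x
    show Λfun U' i (QuotientAddGroup.mk x) = Φ i (QuotientAddGroup.mk x)
    rw [hkey]
    show (QuotientAddGroup.mk (ψ i (Pi.single i x i)) : A i ⧸ pSub p (A i))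
      = Φ i (QuotientAddGroup.mk x)
    rw [Pi.single_eq_same]
    exact hψ i x
end

section
/- Let A be a finite abelian p-group with homocyclic decomposition A = A₁ ⊕ ⋯ ⊕ A_k into components of pairwise distinct exponents, let H be a finite group of order coprime to p, and let Λ_i : Aut(A) → Aut(A_i/pA_i) be the natural projections. Then two representations α, β : H → Aut(A) are conjugate in Aut(A) (i.e., there is ψ ∈ Aut(A) with ψ⁻¹·α(h)·ψ = β(h) for all h) if and only if for every i = 1, …, k, the induced representations α∘Λ_i and β∘Λ_i of H on A_i/pA_i are conjugate in Aut(A_i/pA_i). -/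
/-- The multiplicative group structure that `AddAut A` carried in the older Mathlib
(`g * h = h.trans g`, i.e. composition), restored here since Mathlib now makes it additive. -/
instance AddAut.group (A : Type*) [Add A] : Group (AddAut A) where
  mul g h := AddEquiv.trans h g
  one := AddEquiv.refl _
  inv := AddEquiv.symm
  mul_assoc _ _ _ := rfl
  one_mul _ := rfl
  mul_one _ := rfl
  inv_mul_cancel := AddEquiv.self_trans_symm

open Finset in
private lemma step_unip {R : Type*} [CommRing R] {p : ℕ} (hp : p.Prime) (a : R)
    (ha : IsNilpotent a) : ∃ s g : _, (1 + a) ^ (p ^ s) = 1 + (p : R) * (g * a) := by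
  obtain ⟨n, hn⟩ := ha
  refine ⟨n, ∑ k ∈ Ioo 0 (p ^ n), a ^ (k - 1) * ((p ^ n).choose k / p : ℕ), ?_⟩
  have h := add_pow_prime_pow_eq hp a 1 n
  have hpn : n ≤ p ^ n := Nat.le_of_lt (Nat.lt_pow_self (n := n) hp.one_lt)
  have hapow : a ^ (p ^ n) = 0 := by
    have : a ^ (p ^ n) = a ^ n * a ^ (p ^ n - n) := by
      rw [← pow_add, Nat.add_sub_cancel' hpn]
    rw [this, hn, zero_mul]
  rw [add_comm (1 : R) a, h, hapow]
  rw [sum_mul]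
  have : ∑ k ∈ Ioo 0 (p ^ n), a ^ k * (1 : R) ^ (p ^ n - k) * ((p ^ n).choose k / p : ℕ) =
      ∑ k ∈ Ioo 0 (p ^ n), a ^ (k - 1) * (((p ^ n).choose k / p : ℕ) : R) * a := by
    refine sum_congr rfl fun k hk => ?_
    rw [mem_Ioo] at hk
    have : a ^ k = a ^ (k - 1) * a := by
      conv_lhs => rw [← Nat.sub_add_cancel hk.1, pow_succ]
    rw [this]; ring
  simp only [one_pow, mul_one, zero_add, mul_sum]
  congr 1
  exact sum_congr rfl fun k _ => by ring

private lemma unip_aux {R : Type*} [CommRing R] {p : ℕ} (hp : p.Prime) :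
    ∀ t : ℕ, ∀ a : R, IsNilpotent a →
      ∃ s d : _, IsNilpotent d ∧ (1 + a) ^ (p ^ s) = 1 + (p : R) ^ t * d := by
  intro t
  induction t with
  | zero => intro a ha; exact ⟨0, a, ha, by ring⟩
  | succ t ih =>
    intro a ha
    obtain ⟨s, d, hd, heq⟩ := ih a ha
    have hptd : IsNilpotent ((p : R) ^ t * d) := (Commute.all _ _).isNilpotent_mul_left hd
    obtain ⟨s₂, g, hg⟩ := step_unip hp _ hptd
    refine ⟨s + s₂, g * d, (Commute.all _ _).isNilpotent_mul_left hd, ?_⟩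
    rw [pow_add, pow_mul, heq, hg]; ring

/-- In a commutative ring where `p` is nilpotent, `1 + nilpotent` has `p`-power order. -/
lemma unipotent_pow_prime {R : Type*} [CommRing R] {p : ℕ} (hp : p.Prime) {t : ℕ}
    (hpt : (p : R) ^ t = 0) (a : R) (ha : IsNilpotent a) : ∃ s, (1 + a) ^ (p ^ s) = 1 := by
  obtain ⟨s, d, _, heq⟩ := unip_aux hp t a ha
  exact ⟨s, by rw [heq, hpt, zero_mul, add_zero]⟩

/-- Noncommutative version: in any ring with `(p : R)^t = 0`, `1 + a` with `a` nilpotent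
has `p`-power order. -/
lemma unipotent_pow_prime' {R : Type*} [Ring R] {p : ℕ} (hp : p.Prime) {t : ℕ}
    (hpt : (p : R) ^ t = 0) (a : R) (ha : IsNilpotent a) : ∃ s, (1 + a) ^ (p ^ s) = 1 := by
  let S := Algebra.adjoin ℤ ({a} : Set R)
  letI : CommRing S := Algebra.adjoinCommRingOfComm ℤ (by
    rintro x rfl y rfl; rfl)
  have haS : a ∈ S := Algebra.subset_adjoin rfl
  obtain ⟨n, hn⟩ := ha
  have ha' : IsNilpotent (⟨a, haS⟩ : S) := ⟨n, by ext; exact hn⟩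
  have hpt' : ((p : ℕ) : S) ^ t = 0 := by
    ext
    push_cast
    exact hpt
  obtain ⟨s, hs⟩ := unipotent_pow_prime hp hpt' _ ha'
  refine ⟨s, ?_⟩
  have := congrArg (Subtype.val) hs
  push_cast at this
  convert this using 2


/-- Abelian step: conjugating two homomorphisms that differ by a cocycle in an
abelian normal subgroup of order coprime to `|H|`. -/
lemma conj_abelian {G : Type*} [Group G] {K : Subgroup G} [K.Normal]
    (hcomm : ∀ x ∈ K, ∀ y ∈ K, x * y = y * x)
    {H : Type*} [Group H] [Fintype H]
    (hcop : (Nat.card ↥K).Coprime (Fintype.card H))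
    (α β : H →* G) (hs : ∀ h, α h * (β h)⁻¹ ∈ K) :
    ∃ u ∈ K, ∀ h, u * α h * u⁻¹ = β h := by
  letI : CommGroup ↥K :=
    { (inferInstance : Group ↥K) with
      mul_comm := fun a b => Subtype.ext (hcomm a a.2 b b.2) }
  have hconj : ∀ (h : H) (x : ↥K), β h * (x : G) * (β h)⁻¹ ∈ K := fun h x =>
    Subgroup.Normal.conj_mem ‹K.Normal› x.1 x.2 (β h)
  let φ : H → ↥K →* ↥K := fun h => MonoidHom.mk'
    (fun x => ⟨β h * (x : G) * (β h)⁻¹, hconj h x⟩)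
    (fun a b => Subtype.ext (by push_cast; group))
  let s : H → ↥K := fun h => ⟨α h * (β h)⁻¹, hs h⟩
  have cocycle : ∀ h₁ h₂, s (h₁ * h₂) = s h₁ * φ h₁ (s h₂) := by
    intro h₁ h₂
    apply Subtype.ext
    show α (h₁ * h₂) * (β (h₁ * h₂))⁻¹ =
      (α h₁ * (β h₁)⁻¹) * (β h₁ * (α h₂ * (β h₂)⁻¹) * (β h₁)⁻¹)
    rw [map_mul, map_mul]
    group
  let t : ↥K := ∏ h, s h
  have key : ∀ h₁, s h₁ ^ (Fintype.card H) * φ h₁ t = t := by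
    intro h₁
    have h1 : ∏ h₂, s (h₁ * h₂) = t := Equiv.prod_comp (Equiv.mulLeft h₁) s
    calc s h₁ ^ (Fintype.card H) * φ h₁ t
        = (∏ _h₂ : H, s h₁) * ∏ h₂, φ h₁ (s h₂) := by
          rw [Finset.prod_const, map_prod]; simp
      _ = ∏ h₂, (s h₁ * φ h₁ (s h₂)) := (Finset.prod_mul_distrib).symm
      _ = ∏ h₂, s (h₁ * h₂) := by simp_rw [cocycle]
      _ = t := h1
  let u : ↥K := (powCoprime hcop).symm t
  have hu : u ^ (Fintype.card H) = t := (powCoprime hcop).apply_symm_apply t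
  have hs' : ∀ h, s h = u * (φ h u)⁻¹ := by
    intro h
    have e1 : (φ h u) ^ (Fintype.card H) = φ h t := by
      rw [← map_pow (φ h) u (Fintype.card H), hu]
    have e2 : (u * (φ h u)⁻¹) ^ (Fintype.card H) = t * (φ h t)⁻¹ := by
      rw [mul_pow, inv_pow, e1, hu]
    have e3 : (s h) ^ (Fintype.card H) = t * (φ h t)⁻¹ :=
      eq_mul_inv_iff_mul_eq.mpr (key h)
    apply (powCoprime hcop).injective
    show (s h) ^ (Fintype.card H) = (u * (φ h u)⁻¹) ^ (Fintype.card H)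
    rw [e3, e2]
  refine ⟨(u : G)⁻¹, K.inv_mem u.2, fun h => ?_⟩
  have := congrArg Subtype.val (hs' h)
  push_cast at this
  simp only [φ, MonoidHom.mk'_apply] at this
  rw [mul_inv_eq_iff_eq_mul] at this
  rw [this]
  group

/-- Key lemma (conjugacy of homomorphisms differing by a cocycle in a normal `p`-subgroup,
when `H` has order coprime to `p`). -/
lemma conj_of_pgroup {p : ℕ} (hp : p.Prime) :
    ∀ (n : ℕ) (G : Type) [Group G] [Finite G], Nat.card G = n →
    ∀ (K : Subgroup G), K.Normal → IsPGroup p ↥K →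
    ∀ (H : Type) [Group H] [Finite H], (Nat.card H).Coprime p →
    ∀ (α β : H →* G), (∀ h, α h * (β h)⁻¹ ∈ K) →
    ∃ u ∈ K, ∀ h, u * α h * u⁻¹ = β h := by
  haveI := Fact.mk hp
  intro n
  induction n using Nat.strong_induction_on with
  | _ n ih =>
    intro G _ _ hcard K hKnorm hpK H _ _ hcop α β hs
    haveI := hKnorm
    by_cases hbot : K = ⊥
    · refine ⟨1, K.one_mem, fun h => ?_⟩
      have := hs h
      rw [hbot, Subgroup.mem_bot, mul_inv_eq_one] at this
      simp [this]
    · haveI : Nontrivial ↥K := K.nontrivial_iff_ne_bot.mpr hbot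
      haveI : Nontrivial (Subgroup.center ↥K) := hpK.center_nontrivial
      set Zg : Subgroup G := (Subgroup.center ↥K).map K.subtype with hZg
      have hZgK : Zg ≤ K := Subgroup.map_subtype_le _
      have hZgnorm : Zg.Normal := by
        constructor
        rintro z hz g
        obtain ⟨z₀, hz₀, rfl⟩ := hz
        have hgz : g * (z₀ : G) * g⁻¹ ∈ K := hKnorm.conj_mem _ z₀.2 g
        refine ⟨⟨g * (z₀ : G) * g⁻¹, hgz⟩, ?_, rfl⟩
        rw [SetLike.mem_coe, Subgroup.mem_center_iff]
        intro b
        have hb : g⁻¹ * (b : G) * g ∈ K := by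
          have := hKnorm.conj_mem _ b.2 g⁻¹
          simpa using this
        have hcomm := Subgroup.mem_center_iff.mp (SetLike.mem_coe.mp hz₀)
        have := hcomm ⟨g⁻¹ * (b : G) * g, hb⟩
        apply Subtype.ext
        have := congrArg Subtype.val this
        push_cast at this ⊢
        -- this : g⁻¹ * b * g * z₀ = z₀ * (g⁻¹ * b * g)
        calc (b : G) * (g * (z₀ : G) * g⁻¹)
            = g * ((g⁻¹ * b * g) * z₀) * g⁻¹ := by group
          _ = g * (z₀ * (g⁻¹ * b * g)) * g⁻¹ := by rw [this]
          _ = g * (z₀ : G) * g⁻¹ * b := by group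
      haveI := hZgnorm
      have hZgcomm : ∀ x ∈ Zg, ∀ y ∈ Zg, x * y = y * x := by
        rintro x ⟨x₀, hx₀, rfl⟩ y ⟨y₀, hy₀, rfl⟩
        have hxc := (Subgroup.mem_center_iff.mp (SetLike.mem_coe.mp hx₀)) y₀
        simp only [Subgroup.coe_subtype]
        exact congrArg Subtype.val hxc.symm
      have hZgne : Zg ≠ ⊥ := by
        intro hb
        rw [hZg] at hb
        rw [Subgroup.map_eq_bot_iff_of_injective _ K.subtype_injective] at hb
        exact (Subgroup.nontrivial_iff_ne_bot _).mp
          ‹Nontrivial ↥(Subgroup.center ↥K)› hb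
      have hZgnontriv : Nontrivial ↥Zg := (Subgroup.nontrivial_iff_ne_bot Zg).mpr hZgne
      -- quotient
      set G' := G ⧸ Zg with hG'
      set π := QuotientGroup.mk' Zg with hπ
      have hcard' : Nat.card G' < n := by
        have h1 : Nat.card G = Nat.card G' * Nat.card ↥Zg :=
          Subgroup.card_eq_card_quotient_mul_card_subgroup Zg
        have h2 : 1 < Nat.card ↥Zg := Finite.one_lt_card_iff_nontrivial.mpr hZgnontriv
        have h3 : 0 < Nat.card G' := Nat.card_pos
        rw [← hcard, h1]
        exact lt_mul_of_one_lt_right h3 h2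
      set K' := K.map π with hK'
      haveI hK'norm : K'.Normal := hKnorm.map π (QuotientGroup.mk'_surjective Zg)
      have hpK' : IsPGroup p ↥K' := hpK.map π
      have hs' : ∀ h, (π.comp α) h * ((π.comp β) h)⁻¹ ∈ K' := by
        intro h
        rw [MonoidHom.comp_apply, MonoidHom.comp_apply, ← map_inv π, ← map_mul π]
        exact Subgroup.mem_map_of_mem π (hs h)
      obtain ⟨u', hu'K, hu'⟩ :=
        ih (Nat.card G') hcard' G' rfl K' hK'norm hpK' H hcop (π.comp α) (π.comp β) hs'
      obtain ⟨u₀, hu₀K, rfl⟩ := hu'K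
      set α₂ : H →* G := (MulAut.conj u₀).toMonoidHom.comp α with hα₂
      have hα₂app : ∀ h, α₂ h = u₀ * α h * u₀⁻¹ := fun h => rfl
      have hZmem : ∀ h, α₂ h * (β h)⁻¹ ∈ Zg := by
        intro h
        have hπeq : π (α₂ h * (β h)⁻¹) = 1 := by
          rw [map_mul, map_inv, hα₂app, map_mul, map_mul, map_inv]
          have h5 := hu' h
          simp only [MonoidHom.comp_apply] at h5
          rw [← h5]
          group
        rw [← QuotientGroup.ker_mk' Zg]
        exact MonoidHom.mem_ker.mpr hπeq
      haveI : Fintype H := Fintype.ofFinite H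
      have hpZg : IsPGroup p ↥Zg := hpK.to_le hZgK
      obtain ⟨r, hr⟩ := hpZg.exists_card_eq
      have hcopZ : (Nat.card ↥Zg).Coprime (Fintype.card H) := by
        rw [hr, ← Nat.card_eq_fintype_card]
        exact (hcop.pow_right r).symm
      obtain ⟨u, huZ, hu⟩ := conj_abelian hZgcomm hcopZ α₂ β hZmem
      refine ⟨u * u₀, K.mul_mem (hZgK huZ) hu₀K, fun h => ?_⟩
      have := hu h
      rw [hα₂app] at this
      calc u * u₀ * α h * (u * u₀)⁻¹ = u * (u₀ * α h * u₀⁻¹) * u⁻¹ := by group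
        _ = β h := this


def pdiv (q : ℕ) (B : Type) [AddCommGroup B] : AddSubgroup B :=
  AddMonoidHom.range (q • AddMonoidHom.id B)

lemma mem_pdiv {q : ℕ} {B : Type} [AddCommGroup B] {x : B} :
    x ∈ pdiv q B ↔ ∃ y, q • y = x := Iff.rfl

lemma smul_id_apply {q : ℕ} {B : Type} [AddCommGroup B] (x : B) :
    (q • AddMonoidHom.id B) x = q • x := rfl

lemma pSub_eq_pdiv {p : ℕ} {B : Type} [AddCommGroup B] : pSub p B = pdiv p B := rfl

lemma pdiv_mono {p : ℕ} {B : Type} [AddCommGroup B] {a b : ℕ} (h : a ≤ b) :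
    pdiv (p ^ b) B ≤ pdiv (p ^ a) B := by
  rintro x ⟨y, rfl⟩
  exact ⟨p ^ (b - a) • y, by
    show (p ^ a) • ((p ^ (b-a)) • y) = (p ^ b) • y
    rw [smul_smul, ← pow_add, Nat.add_sub_cancel' h]⟩

lemma smul_mem_pdiv {p : ℕ} {B : Type} [AddCommGroup B] (a : ℕ) {b : ℕ} {x : B}
    (hx : x ∈ pdiv (p ^ b) B) : (p ^ a) • x ∈ pdiv (p ^ (a + b)) B := by
  obtain ⟨y, rfl⟩ := hx
  exact ⟨y, by show (p^(a+b)) • y = (p^a) • (p^b) • y; rw [smul_smul, ← pow_add]⟩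

/-- In a homocyclic group of exponent `p ^ e`, an element killed by `p ^ t` with `t < e`
is divisible by `p`. -/
lemma order_dvd_imp_pdiv {p : ℕ} (hp : p.Prime) {e m : ℕ} {B : Type} [AddCommGroup B]
    (σ : B ≃+ (Fin m → ZMod (p ^ e))) {z : B} {t : ℕ} (ht : t < e)
    (hz : p ^ t • z = 0) : z ∈ pSub p B := by
  haveI : NeZero (p ^ e) := ⟨pow_ne_zero _ hp.ne_zero⟩
  have hσz : p ^ t • σ z = 0 := by rw [← map_nsmul, hz, map_zero]
  have hdvd : ∀ l, p ∣ (σ z l).val := by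
    intro l
    have h1 : p ^ t • (σ z l) = 0 := by
      have := congrFun hσz l
      simpa [Pi.smul_apply] using this
    have h2 : ((p ^ t * (σ z l).val : ℕ) : ZMod (p ^ e)) = 0 := by
      push_cast
      rw [← Nat.cast_pow, ← nsmul_eq_mul, ZMod.natCast_zmod_val]
      exact h1
    rw [ZMod.natCast_eq_zero_iff] at h2
    have h3 : p ^ t * p ^ (e - t) ∣ p ^ t * (σ z l).val := by
      rw [← pow_add, Nat.add_sub_cancel' ht.le]; exact h2
    have h4 : p ^ (e - t) ∣ (σ z l).val :=
      (Nat.mul_dvd_mul_iff_left (Nat.pow_pos (n := t) hp.pos)).mp h3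
    exact dvd_trans (dvd_pow_self p (Nat.sub_ne_zero_of_lt ht)) h4
  set w₀ : Fin m → ZMod (p ^ e) := fun l => (((σ z l).val / p : ℕ) : ZMod (p ^ e)) with hw₀
  have hpw : p • w₀ = σ z := by
    funext l
    show p • (((σ z l).val / p : ℕ) : ZMod (p ^ e)) = σ z l
    rw [nsmul_eq_mul, ← Nat.cast_mul, Nat.mul_div_cancel' (hdvd l),
      ZMod.natCast_zmod_val]
  refine ⟨σ.symm w₀, ?_⟩
  show p • σ.symm w₀ = z
  rw [← map_nsmul, hpw, σ.symm_apply_apply]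

lemma ker_lambda_pgroup (p : ℕ) (hp : p.Prime) (k : ℕ) (A : Fin k → Type)
    [∀ i, AddCommGroup (A i)]
    (e m : Fin k → ℕ)
    (hA : ∀ i, Nonempty (A i ≃+ (Fin (m i) → ZMod (p ^ e i))))
    (hexp : ∀ i, AddMonoid.exponent (A i) = p ^ e i)
    (hdist : ∀ i j, i ≠ j → e i ≠ e j)
    (Λ : ∀ i : Fin k, AddAut (∀ j, A j) →* AddAut (A i ⧸ pSub p (A i)))
    (hΛ : ∀ (i : Fin k) (U : AddAut (∀ j, A j)) (x : A i),
      Λ i U ((QuotientAddGroup.mk x : A i ⧸ pSub p (A i))) =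
        (QuotientAddGroup.mk (U (Pi.single i x) i) : A i ⧸ pSub p (A i)))
    (U : AddAut (∀ j, A j)) (hU : ∀ i, Λ i U = 1) :
    ∃ s, U ^ (p ^ s) = 1 := by
  classical
  set P := ∀ j, A j with hP
  set W : AddMonoid.End P := AddEquiv.toAddMonoidHom (U : P ≃+ P) with hWdef
  set V : AddMonoid.End P := W - 1 with hVdef
  have hWV : W = 1 + V := by rw [hVdef, add_comm, sub_add_cancel]
  have hVapp : ∀ x : P, V x = U x - x := fun x => rfl
  set E := Finset.univ.sup e with hE
  have hkill : ∀ (j : Fin k) (y : A j), p ^ (e j) • y = 0 := fun j y => by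
    rw [← hexp j]; exact AddMonoid.exponent_nsmul_eq_zero y
  have hkillE : ∀ (j : Fin k) (y : A j), p ^ E • y = 0 := fun j y => by
    have h : p ^ E = p ^ (E - e j) * p ^ (e j) := by
      rw [← pow_add, Nat.sub_add_cancel (Finset.le_sup (Finset.mem_univ j))]
    rw [h, mul_smul, hkill, smul_zero]
  have hpE : ((p : ℕ) : AddMonoid.End P) ^ E = 0 := by
    refine DFunLike.ext _ _ fun x => ?_
    show (((p : ℕ) : AddMonoid.End P) ^ E) x = 0
    rw [← Nat.cast_pow, AddMonoid.End.natCast_apply]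
    funext j
    show p ^ E • x j = 0
    exact hkillE j (x j)
  -- diagonal entries are divisible by p
  have hdiag : ∀ (i : Fin k) (y : A i), V (Pi.single i y) i ∈ pSub p (A i) := by
    intro i y
    have h1 := hΛ i U y
    rw [hU i] at h1
    have h2 : (QuotientAddGroup.mk (U (Pi.single i y) i) : A i ⧸ pSub p (A i)) =
        QuotientAddGroup.mk y := h1.symm
    rw [QuotientAddGroup.eq_iff_sub_mem] at h2
    have h3 : V (Pi.single i y) i = U (Pi.single i y) i - y := by
      show (U (Pi.single i y) - Pi.single i y) i = _
      rw [Pi.sub_apply, Pi.single_eq_same]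
    rw [h3]; exact h2
  -- entries going up in exponent are divisible by p
  have hoff : ∀ (i j : Fin k) (y : A i), e i < e j →
      V (Pi.single i y) j ∈ pSub p (A j) := by
    intro i j y hij
    have hne : i ≠ j := fun h => absurd (h ▸ hij) (lt_irrefl _)
    have hVy : V (Pi.single i y) j = U (Pi.single i y) j := by
      show (U (Pi.single i y) - Pi.single i y) j = _
      rw [Pi.sub_apply, Pi.single_eq_of_ne (Ne.symm hne), sub_zero]
    have h0 : (p ^ (e i)) • (Pi.single i y : P) = 0 := by
      funext l
      by_cases hl : l = i
      · subst hl
        show p ^ (e l) • (Pi.single l y : P) l = 0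
        rw [Pi.single_eq_same]; exact hkill l y
      · show p ^ (e i) • (Pi.single i y : P) l = 0
        rw [Pi.single_eq_of_ne hl, smul_zero]
    have h1 : (p ^ (e i)) • (U (Pi.single i y)) = 0 := by
      rw [← map_nsmul U (p ^ (e i)) (Pi.single i y), h0, map_zero]
    have horder : p ^ (e i) • (U (Pi.single i y) j) = 0 := by
      have := congrFun h1 j
      exact this
    rw [hVy]
    exact order_dvd_imp_pdiv hp (hA j).some hij horder
  -- level function
  let c : Fin k → ℕ := fun j => ((Finset.univ.image e).filter (fun v => v < e j)).card
  let L : ℕ := (Finset.univ.image e).card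
  have hLpos : ∀ _j : Fin k, 0 < L := fun j =>
    Finset.card_pos.mpr ⟨e j, Finset.mem_image_of_mem e (Finset.mem_univ j)⟩
  have hcL : ∀ j, c j < L := by
    intro j
    apply Finset.card_lt_card
    rw [Finset.ssubset_iff_of_subset (Finset.filter_subset _ _)]
    exact ⟨e j, Finset.mem_image_of_mem e (Finset.mem_univ j), by simp⟩
  have hmono : ∀ i j : Fin k, e i < e j → c i + 1 ≤ c j := by
    intro i j hij
    have hsub : ((Finset.univ.image e).filter (fun v => v < e i)) ⊂
        ((Finset.univ.image e).filter (fun v => v < e j)) := by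
      rw [Finset.ssubset_iff_of_subset
        (Finset.monotone_filter_right _ (fun v _ hv => lt_trans hv hij))]
      exact ⟨e i, Finset.mem_filter.mpr
        ⟨Finset.mem_image_of_mem e (Finset.mem_univ i), hij⟩, by simp⟩
    exact Nat.succ_le_of_lt (Finset.card_lt_card hsub)
  -- main inductive claim
  have main : ∀ (t : ℕ) (x : P) (j : Fin k),
      (V ^ t) x j ∈ pdiv (p ^ ((t + c j) / L)) (A j) := by
    intro t
    induction t with
    | zero =>
      intro x j
      rw [Nat.zero_add, Nat.div_eq_of_lt (hcL j)]
      refine ⟨(V ^ 0) x j, ?_⟩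
      rw [smul_id_apply, pow_zero, one_smul]
    | succ t ih =>
      intro x j
      have hz : (V ^ (t + 1)) x = V ((V ^ t) x) := by
        rw [pow_succ']
        rfl
      choose y hy using fun j' => ih x j'
      simp only [smul_id_apply] at hy
      have hzsum : (V ^ t) x = ∑ j', Pi.single j' ((p ^ ((t + c j') / L)) • y j') := by
        conv_lhs => rw [← Finset.univ_sum_single ((V ^ t) x)]
        refine Finset.sum_congr rfl fun j' _ => ?_
        rw [← hy j']
      rw [hz, hzsum, map_sum]
      rw [Finset.sum_apply]
      apply AddSubgroup.sum_mem
      intro j' _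
      have hterm : V (Pi.single j' ((p ^ ((t + c j') / L)) • y j')) j
          = (p ^ ((t + c j') / L)) • (V (Pi.single j' (y j')) j) := by
        rw [Pi.single_smul, map_nsmul, Pi.smul_apply]
      rw [hterm]
      rcases lt_trichotomy (e j') (e j) with hlt | heq | hgt
      · have h1 : V (Pi.single j' (y j')) j ∈ pdiv (p ^ 1) (A j) := by
          rw [pow_one, ← pSub_eq_pdiv]
          exact hoff j' j (y j') hlt
        have h2 := smul_mem_pdiv (p := p) ((t + c j') / L) h1
        refine pdiv_mono ?_ h2
        have hb : t + 1 + c j ≤ (t + c j') + L := by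
          have := hcL j
          omega
        calc (t + 1 + c j) / L ≤ ((t + c j') + L) / L := Nat.div_le_div_right hb
          _ = (t + c j') / L + 1 := Nat.add_div_right _ (hLpos j)
      · have hjj : j' = j := by
          by_contra hne
          exact hdist j' j hne heq
        subst hjj
        have h1 : V (Pi.single j' (y j')) j' ∈ pdiv (p ^ 1) (A j') := by
          rw [pow_one, ← pSub_eq_pdiv]
          exact hdiag j' (y j')
        have h2 := smul_mem_pdiv (p := p) ((t + c j') / L) h1
        refine pdiv_mono ?_ h2
        have hb : t + 1 + c j' ≤ (t + c j') + L := by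
          have := hcL j'
          omega
        calc (t + 1 + c j') / L ≤ ((t + c j') + L) / L := Nat.div_le_div_right hb
          _ = (t + c j') / L + 1 := Nat.add_div_right _ (hLpos j')
      · refine pdiv_mono ?_ ⟨V (Pi.single j' (y j')) j, rfl⟩
        refine Nat.div_le_div_right ?_
        have := hmono j j' hgt
        omega
  -- nilpotency
  have hVnil : IsNilpotent V := by
    refine ⟨L * (E + 1), ?_⟩
    refine DFunLike.ext _ _ fun x => ?_
    show (V ^ (L * (E + 1))) x = 0
    funext j
    have h1 := main (L * (E + 1)) x j
    have h2 : e j ≤ (L * (E + 1) + c j) / L := by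
      have h3 : (L * (E + 1)) / L ≤ (L * (E + 1) + c j) / L :=
        Nat.div_le_div_right (Nat.le_add_right _ _)
      rw [Nat.mul_div_cancel_left _ (hLpos j)] at h3
      exact le_trans (le_trans (Finset.le_sup (Finset.mem_univ j)) (Nat.le_succ E)) h3
    obtain ⟨w, hw⟩ := h1
    show (V ^ (L * (E + 1))) x j = 0
    rw [← hw]
    show p ^ ((L * (E + 1) + c j) / L) • w = 0
    have h4 : p ^ ((L * (E + 1) + c j) / L)
        = p ^ ((L * (E + 1) + c j) / L - e j) * p ^ (e j) := by
      rw [← pow_add, Nat.sub_add_cancel h2]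
    rw [h4, mul_smul, hkill, smul_zero]
  obtain ⟨s, hs⟩ := unipotent_pow_prime' hp hpE V hVnil
  have hWpow : W ^ (p ^ s) = 1 := by rw [hWV, hs]
  refine ⟨s, ?_⟩
  have happ : ∀ (n : ℕ) (x : P), (U ^ n) x = (W ^ n) x := by
    intro n
    induction n with
    | zero => intro x; rw [pow_zero, pow_zero]; rfl
    | succ n ihn =>
      intro x
      rw [pow_succ, pow_succ]
      rw [show ∀ (f g : AddAut P) (x : P), (f * g) x = f (g x) from fun _ _ _ => rfl]
      show (U ^ n) (U x) = (W ^ n) (W x)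
      exact ihn (U x)
  have : ∀ x : P, (U ^ (p ^ s)) x = x := by
    intro x
    rw [happ, hWpow]
    rfl
  exact DFunLike.ext _ _ this


lemma lift_aut (p : ℕ) (hp : p.Prime) {ei mi : ℕ} (B : Type) [AddCommGroup B]
    (σ : B ≃+ (Fin mi → ZMod (p ^ ei)))
    (hexpB : AddMonoid.exponent B = p ^ ei)
    (ψ : AddAut (B ⧸ pSub p B)) :
    ∃ Θ : AddAut B, ∀ x : B,
      (QuotientAddGroup.mk (Θ x) : B ⧸ pSub p B) = ψ (QuotientAddGroup.mk x) := by
  haveI := Fact.mk hp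
  haveI : NeZero p := ⟨hp.ne_zero⟩
  haveI : NeZero (p ^ ei) := ⟨pow_ne_zero _ hp.ne_zero⟩
  by_cases he : ei = 0
  · -- trivial group case
    haveI : Subsingleton B := by
      constructor
      intro a b
      have hz : ∀ x : B, x = 0 := by
        intro x
        have h1 := AddMonoid.exponent_nsmul_eq_zero x
        rw [hexpB, he, pow_zero, one_nsmul] at h1
        exact h1
      rw [hz a, hz b]
    haveI : Subsingleton (B ⧸ pSub p B) := Quotient.instSubsingletonQuotient _
    exact ⟨1, fun x => Subsingleton.elim _ _⟩
  · have hdvd : p ∣ p ^ ei := dvd_pow_self p he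
    set M := (Fin mi → ZMod (p ^ ei)) with hM
    set Vp := (Fin mi → ZMod p) with hVp
    -- reduction map
    set r : M →+ Vp := AddMonoidHom.mk'
      (fun v l => ZMod.castHom hdvd (ZMod p) (v l))
      (fun a b => by
        funext l
        exact map_add (ZMod.castHom hdvd (ZMod p)) (a l) (b l)) with hr
    have hrapp : ∀ (v : M) (l : Fin mi), r v l = ZMod.castHom hdvd (ZMod p) (v l) :=
      fun v l => rfl
    have hrsur : Function.Surjective r := by
      intro w
      refine ⟨fun l => ((w l).val : ZMod (p ^ ei)), ?_⟩
      funext l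
      rw [hrapp, map_natCast, ZMod.natCast_zmod_val]
    have hker : r.ker = pSub p M := by
      ext v
      constructor
      · intro hv
        rw [AddMonoidHom.mem_ker] at hv
        have hv' : ∀ l, ((v l).val : ZMod p) = 0 := by
          intro l
          have h9 : r v l = 0 := congrFun hv l
          rw [hrapp] at h9
          rwa [← ZMod.natCast_zmod_val (v l), map_natCast] at h9
        have hpd : ∀ l, p ∣ (v l).val := fun l =>
          (ZMod.natCast_eq_zero_iff _ _).mp (hv' l)
        refine ⟨fun l => (((v l).val / p : ℕ) : ZMod (p ^ ei)), ?_⟩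
        funext l
        show p • (((v l).val / p : ℕ) : ZMod (p ^ ei)) = v l
        rw [nsmul_eq_mul, ← Nat.cast_mul, Nat.mul_div_cancel' (hpd l),
          ZMod.natCast_zmod_val]
      · rintro ⟨y, rfl⟩
        have : r ((p • AddMonoidHom.id M) y) = p • r y := by
          rw [smul_id_apply, map_nsmul]
        rw [AddMonoidHom.mem_ker, this]
        funext l
        show p • (r y l) = 0
        rw [nsmul_eq_mul, ZMod.natCast_self, zero_mul]
    -- quotient iso
    set τ : (M ⧸ pSub p M) ≃+ Vp :=
      (QuotientAddGroup.quotientAddEquivOfEq hker.symm).trans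
        (QuotientAddGroup.quotientKerEquivOfSurjective r hrsur) with hτdef
    have hτ : ∀ v : M, τ (QuotientAddGroup.mk v) = r v := fun v => rfl
    -- transported subgroup
    have hmap : (pSub p B).map σ.toAddMonoidHom = pSub p M := by
      ext z
      constructor
      · rintro ⟨b, ⟨y, rfl⟩, rfl⟩
        refine ⟨σ y, ?_⟩
        show p • σ y = σ ((p • AddMonoidHom.id B) y)
        rw [smul_id_apply, map_nsmul]
      · rintro ⟨w, rfl⟩
        refine ⟨σ.symm ((p • AddMonoidHom.id M) w), ⟨σ.symm w, ?_⟩, ?_⟩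
        · show (p • AddMonoidHom.id B) (σ.symm w) = σ.symm ((p • AddMonoidHom.id M) w)
          rw [smul_id_apply, smul_id_apply, map_nsmul]
        · show σ (σ.symm _) = _
          rw [σ.apply_symm_apply]
    set Q : (B ⧸ pSub p B) ≃+ Vp :=
      (QuotientAddGroup.congr (pSub p B) (pSub p M) σ hmap).trans τ with hQdef
    have hQ : ∀ b : B, Q (QuotientAddGroup.mk b) = r (σ b) := fun b => rfl
    -- the induced automorphism of Vp
    set f : Vp ≃+ Vp := (Q.symm.trans ((ψ : (B ⧸ pSub p B) ≃+ (B ⧸ pSub p B)).trans Q))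
      with hfdef
    have hf : ∀ q : B ⧸ pSub p B, f (Q q) = Q (ψ q) := by
      intro q
      show Q (ψ (Q.symm (Q q))) = Q (ψ q)
      rw [Q.symm_apply_apply]
    -- linearity
    have hsmul : ∀ (g : Vp ≃+ Vp) (c : ZMod p) (x : Vp), g (c • x) = c • g x := by
      intro g c x
      rw [← ZMod.natCast_zmod_val c, Nat.cast_smul_eq_nsmul, Nat.cast_smul_eq_nsmul,
        map_nsmul]
    set flin : Vp →ₗ[ZMod p] Vp :=
      { toFun := f, map_add' := f.map_add, map_smul' := fun c x => hsmul f c x } with hflin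
    set glin : Vp →ₗ[ZMod p] Vp :=
      { toFun := f.symm, map_add' := f.symm.map_add,
        map_smul' := fun c x => hsmul f.symm c x } with hglin
    set F := LinearMap.toMatrix' flin with hF
    set G := LinearMap.toMatrix' glin with hG
    have hFG : F * G = 1 := by
      rw [hF, hG, ← LinearMap.toMatrix'_comp]
      have : flin ∘ₗ glin = LinearMap.id := by
        apply LinearMap.ext
        intro x
        show f (f.symm x) = x
        exact f.apply_symm_apply x
      rw [this, LinearMap.toMatrix'_id]
    have hFdet : IsUnit F.det :=
      IsUnit.of_mul_eq_one G.det (by rw [← Matrix.det_mul, hFG, Matrix.det_one])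
    -- lift the matrix
    set Bm : Matrix (Fin mi) (Fin mi) (ZMod (p ^ ei)) :=
      Matrix.of (fun i j => (((F i j).val : ℕ) : ZMod (p ^ ei))) with hBm
    have hBmap : Bm.map (ZMod.castHom hdvd (ZMod p)) = F := by
      ext i j
      show ZMod.castHom hdvd (ZMod p) (((F i j).val : ℕ) : ZMod (p ^ ei)) = F i j
      rw [map_natCast, ZMod.natCast_zmod_val]
    have hcast : ZMod.castHom hdvd (ZMod p) Bm.det = F.det := by
      rw [RingHom.map_det, RingHom.mapMatrix_apply, hBmap]
    have hBdet : IsUnit Bm.det := by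
      have hpnd : ¬ p ∣ (Bm.det).val := by
        intro hd
        have h0 : ZMod.castHom hdvd (ZMod p) Bm.det = 0 := by
          rw [← ZMod.natCast_zmod_val Bm.det, map_natCast]
          exact (ZMod.natCast_eq_zero_iff _ _).mpr hd
        rw [hcast] at h0
        rw [h0] at hFdet
        exact zero_ne_one (isUnit_zero_iff.mp hFdet)
      rw [← ZMod.natCast_zmod_val Bm.det, ZMod.isUnit_iff_coprime]
      exact Nat.Coprime.pow_right ei ((Nat.Prime.coprime_iff_not_dvd hp).mpr hpnd).symm
    haveI := Bm.invertibleOfIsUnitDet hBdet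
    set Cm := ⅟Bm with hCm
    -- the automorphism of M
    set Θm : M ≃+ M :=
      { toFun := Bm.mulVec
        invFun := Cm.mulVec
        left_inv := fun x => by
          rw [Matrix.mulVec_mulVec, hCm, invOf_mul_self, Matrix.one_mulVec]
        right_inv := fun x => by
          rw [Matrix.mulVec_mulVec, hCm, mul_invOf_self, Matrix.one_mulVec]
        map_add' := fun x y => Matrix.mulVec_add Bm x y } with hΘm
    have h5 : ∀ v : Vp, F.mulVec v = f v := by
      intro v
      have h6 : Matrix.toLin' F v = flin v := by rw [hF, Matrix.toLin'_toMatrix']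
      rw [← Matrix.toLin'_apply]
      exact h6
    have hcommute : ∀ v : M, r (Θm v) = f (r v) := by
      intro v
      show r (Bm.mulVec v) = f (r v)
      rw [← h5]
      funext l
      rw [hrapp]
      show ZMod.castHom hdvd (ZMod p) (Bm.mulVec v l) = F.mulVec (r v) l
      simp only [Matrix.mulVec, dotProduct, map_sum, map_mul]
      refine Finset.sum_congr rfl fun j _ => ?_
      rw [← hBmap]
      show _ * _ = (Bm.map (ZMod.castHom hdvd (ZMod p))) l j * r v j
      rw [Matrix.map_apply, hrapp]
    refine ⟨(σ.trans Θm).trans σ.symm, fun x => ?_⟩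
    apply Q.injective
    rw [hQ, ← hf, hQ]
    show r (σ (σ.symm (Θm (σ x)))) = f (r (σ x))
    rw [σ.apply_symm_apply]
    exact hcommute (σ x)

/-- Let `A = A₁ ⊕ ⋯ ⊕ A_k` be a finite abelian `p`-group with homocyclic
components of pairwise distinct exponents, `H` a finite group of order coprime to `p`, and
`Λ i : Aut(A) → Aut(Aᵢ/pAᵢ)` the natural projections. Two representations
`α, β : H → Aut(A)` are conjugate in `Aut(A)` if and only if for every `i` the induced
representations `α ∘ Λ i` and `β ∘ Λ i` are conjugate in `Aut(Aᵢ/pAᵢ)`. -/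
theorem stmt7 (p : ℕ) (hp : p.Prime) (k : ℕ) (A : Fin k → Type)
    [∀ i, AddCommGroup (A i)] [∀ i, Fintype (A i)]
    (e m : Fin k → ℕ)
    (hA : ∀ i, Nonempty (A i ≃+ (Fin (m i) → ZMod (p ^ e i))))
    (hexp : ∀ i, AddMonoid.exponent (A i) = p ^ e i)
    (hdist : ∀ i j, i ≠ j → e i ≠ e j)
    (H : Type) [Group H] [Finite H]
    (hH : Nat.Coprime (Nat.card H) p)
    (Λ : ∀ i : Fin k, AddAut (∀ j, A j) →* AddAut (A i ⧸ pSub p (A i)))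
    (hΛ : ∀ (i : Fin k) (U : AddAut (∀ j, A j)) (x : A i),
      Λ i U ((QuotientAddGroup.mk x : A i ⧸ pSub p (A i))) =
        (QuotientAddGroup.mk (U (Pi.single i x) i) : A i ⧸ pSub p (A i)))
    (α β : H →* AddAut (∀ i, A i)) :
    (∃ ψ : AddAut (∀ i, A i), ∀ h : H, ψ * α h * ψ⁻¹ = β h) ↔
      (∀ i : Fin k, ∃ ψi : AddAut (A i ⧸ pSub p (A i)),
        ∀ h : H, ψi * Λ i (α h) * ψi⁻¹ = Λ i (β h)) := by
  classical
  constructor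
  · rintro ⟨ψ, hψ⟩ i
    refine ⟨Λ i ψ, fun h => ?_⟩
    rw [← map_inv, ← map_mul, ← map_mul, hψ h]
  · intro hloc
    choose ψi hψi using hloc
    choose Θ hΘ using fun i => lift_aut p hp (A i) (hA i).some (hexp i) (ψi i)
    set Ψ : AddAut (∀ i, A i) := AddEquiv.piCongrRight (fun i => (Θ i : A i ≃+ A i))
      with hΨdef
    have hΛΨ : ∀ i, Λ i Ψ = ψi i := by
      intro i
      refine DFunLike.ext _ _ fun z => ?_
      induction z using QuotientAddGroup.induction_on with
      | H x =>
        rw [hΛ i Ψ x]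
        have h1 : Ψ (Pi.single i x) i = Θ i x := by
          show Θ i ((Pi.single i x) i) = Θ i x
          rw [Pi.single_eq_same]
        rw [h1, hΘ i x]
    -- the kernel of the combined map
    set Λ' : AddAut (∀ i, A i) →* (∀ i, AddAut (A i ⧸ pSub p (A i))) :=
      Pi.monoidHom Λ with hΛ'def
    set K := Λ'.ker with hK
    have hmemK : ∀ U : AddAut (∀ i, A i), U ∈ K ↔ ∀ i, Λ i U = 1 := by
      intro U
      rw [hK, MonoidHom.mem_ker, funext_iff]
      exact Iff.rfl
    haveI : Finite (AddAut (∀ i, A i)) :=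
      Finite.of_injective (fun (U : AddAut (∀ i, A i)) => (U : (∀ i, A i) → ∀ i, A i))
        DFunLike.coe_injective
    have hKp : IsPGroup p ↥K := by
      intro g
      obtain ⟨s, hs⟩ := ker_lambda_pgroup p hp k A e m hA hexp hdist Λ hΛ (g : AddAut _)
        (fun i => (hmemK _).mp g.2 i)
      exact ⟨s, Subtype.ext (by rw [SubmonoidClass.coe_pow]; exact hs)⟩
    set α' : H →* AddAut (∀ i, A i) := (MulAut.conj Ψ).toMonoidHom.comp α with hα'def
    have hα'app : ∀ h, α' h = Ψ * α h * Ψ⁻¹ := fun h => rfl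
    have hsK : ∀ h, α' h * (β h)⁻¹ ∈ K := by
      intro h
      rw [hmemK]
      intro i
      rw [map_mul, map_inv, hα'app, map_mul, map_mul, map_inv, hΛΨ]
      rw [hψi i h]
      simp
    obtain ⟨u, huK, hu⟩ := conj_of_pgroup hp (Nat.card (AddAut (∀ i, A i)))
      (AddAut (∀ i, A i)) rfl K (MonoidHom.normal_ker Λ') hKp H hH α' β hsK
    refine ⟨u * Ψ, fun h => ?_⟩
    have := hu h
    rw [hα'app] at this
    calc u * Ψ * α h * (u * Ψ)⁻¹ = u * (Ψ * α h * Ψ⁻¹) * u⁻¹ := by group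
      _ = β h := this
end

section
/- Let G be a finite group with abelian Sylow subgroups (an A-group), let A be a normal abelian p-subgroup of G with complement H (i.e., A ∩ H = 1, AH = G), and let α : H → Aut(A) be the conjugation representation. Then the subgroup K of H generated by all p-elements of H lies in the kernel of α, so α factors through a representation of H/K, a group of order coprime to p, on A. -/
/-- Let `G` be a finite group with abelian Sylow subgroups, `A` a normal abelian
`p`-subgroup with complement `H` (i.e. `A ∩ H = 1` and `AH = G`). Then the subgroup `K` of `H`
generated by all `p`-elements of `H` acts trivially on `A` by conjugation (so the conjugation
representation factors through `H/K`), and `H/K` has order coprime to `p`. -/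
theorem stmt10 (G : Type) [Group G] [Finite G] (p : ℕ) (hp : p.Prime)
    (hSyl : ∀ (q : ℕ), q.Prime → ∀ Q : Sylow q G, IsMulCommutative (Q : Subgroup G))
    (A H : Subgroup G) (hAn : A.Normal) (hAc : IsMulCommutative A) (hAp : IsPGroup p A)
    (hint : A ⊓ H = ⊥)
    (hprod : ∀ g : G, ∃ a ∈ A, ∃ h ∈ H, g = a * h) :
    ∀ K : Subgroup H, K = Subgroup.closure {x : H | ∃ n : ℕ, orderOf x = p ^ n} →
      (∀ k ∈ K, ∀ a ∈ A, (k : G)⁻¹ * a * (k : G) = a) ∧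
      Nat.Coprime p (Nat.card (H ⧸ K)) := by
  intro K hK
  constructor
  · -- K centralizes A
    have hgen : ∀ x : H, (∃ n : ℕ, orderOf x = p ^ n) →
        (x : G) ∈ Subgroup.centralizer (A : Set G) := by
      rintro x ⟨n, hn⟩
      have hx : orderOf (x : G) = p ^ n := by
        rw [← hn]; exact (orderOf_injective H.subtype H.subtype_injective x).symm ▸ rfl
      have hpx : IsPGroup p (Subgroup.zpowers (x : G)) :=
        IsPGroup.of_card (by rw [Nat.card_zpowers, hx])
      have hsup : IsPGroup p ((A ⊔ Subgroup.zpowers (x : G) : Subgroup G)) :=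
        hAp.to_sup_of_normal_left hpx
      obtain ⟨Q, hQ⟩ := hsup.exists_le_sylow
      have hcomm := hSyl p hp Q
      rw [Subgroup.mem_centralizer_iff]
      intro a ha
      have haQ : a ∈ (Q : Subgroup G) := hQ (le_sup_left (α := Subgroup G) ha)
      have hxQ : (x : G) ∈ (Q : Subgroup G) :=
        hQ (le_sup_right (α := Subgroup G) (Subgroup.mem_zpowers _))
      exact Subgroup.mul_comm_of_mem_isMulCommutative (Q : Subgroup G) haQ hxQ
    have hle : K ≤ Subgroup.comap H.subtype (Subgroup.centralizer (A : Set G)) := by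
      rw [hK, Subgroup.closure_le]
      intro x hx
      exact hgen x hx
    intro k hk a ha
    have hc : a * (k : G) = (k : G) * a := Subgroup.mem_centralizer_iff.mp (hle hk) a ha
    rw [mul_assoc, hc, ← mul_assoc, inv_mul_cancel, one_mul]
  · -- coprimality
    rw [hp.coprime_iff_not_dvd]
    haveI : Fact p.Prime := ⟨hp⟩
    have hcard : Nat.card (H ⧸ K) = K.index := (Subgroup.index_eq_card K).symm
    rw [hcard]
    obtain P : Sylow p H := default
    have hPK : (P : Subgroup H) ≤ K := by
      rw [hK]
      intro x hx
      obtain ⟨n, hn⟩ := IsPGroup.iff_orderOf.mp P.isPGroup' (⟨x, hx⟩ : (P : Subgroup H))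
      refine Subgroup.subset_closure ⟨n, ?_⟩
      rw [← hn]
      exact orderOf_injective (P : Subgroup H).subtype (P : Subgroup H).subtype_injective
        ⟨x, hx⟩
    intro hdvd
    exact P.not_dvd_index (hdvd.trans (Subgroup.index_dvd_of_le hPK))
end

section
/- Let G and H be finite directly indecomposable nonabelian groups, and let S = G × Z(H) ≤ G × H. Then S is invariant under every automorphism of G × H if and only if G is not isomorphic to H. -/
/-- A group is directly indecomposable if it is nontrivial and is not the internal direct
product of two nontrivial subgroups. -/
def DirectlyIndecomposable (G : Type) [Group G] : Prop :=
  Nontrivial G ∧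
    ¬ ∃ (A B : Subgroup G), A ≠ ⊥ ∧ B ≠ ⊥ ∧ (∀ a ∈ A, ∀ b ∈ B, Commute a b) ∧
      A ⊓ B = ⊥ ∧ A ⊔ B = ⊤

section Helpers

variable {H : Type} [Group H]

lemma iter_map_mul (v : H →* H) : ∀ (n : ℕ) (x y : H),
    (⇑v)^[n] (x * y) = (⇑v)^[n] x * (⇑v)^[n] y := by
  intro n
  induction n with
  | zero => intro x y; simp
  | succ n ih =>
    intro x y
    simp only [Function.iterate_succ_apply, map_mul]
    exact ih _ _

lemma iter_norm (v : H →* H) (hv : ∀ x y, v (x * y * x⁻¹) = x * v y * x⁻¹) :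
    ∀ (n : ℕ) (x y : H), (⇑v)^[n] (x * y * x⁻¹) = x * (⇑v)^[n] y * x⁻¹ := by
  intro n
  induction n with
  | zero => intro x y; simp
  | succ n ih =>
    intro x y
    simp only [Function.iterate_succ_apply]
    rw [hv, ih]

lemma aux_normal {K L : Subgroup H} (hKL : ∀ k ∈ K, ∀ l ∈ L, k * l = l * k)
    (u v : H →* H) (hu : ∀ x, u x ∈ K) (hv : ∀ x, v x ∈ L)
    (huv : ∀ x, u x * v x = x) :
    ∀ x y, v (x * y * x⁻¹) = x * v y * x⁻¹ := by
  intro x y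
  have h1 : v (x * y * x⁻¹) = v x * v y * (v x)⁻¹ := by
    rw [map_mul, map_mul, map_inv]
  have h2 : v x * v y * (v x)⁻¹ ∈ L := mul_mem (mul_mem (hv x) (hv y)) (inv_mem (hv x))
  have h3 : u x * (v x * v y * (v x)⁻¹) = (v x * v y * (v x)⁻¹) * u x :=
    hKL _ (hu x) _ h2
  have h4 : x * v y * x⁻¹ = (u x * v x) * v y * (u x * v x)⁻¹ := by rw [huv x]
  have h5 : (u x * v x) * v y * (u x * v x)⁻¹ = u x * (v x * v y * (v x)⁻¹) * (u x)⁻¹ := by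
    group
  rw [h1, h4, h5, h3]
  simp [mul_assoc]

lemma telescope (K : Subgroup H) (u v : H → H) (hu : ∀ h, u h ∈ K)
    (huv : ∀ h, u h * v h = h) :
    ∀ (n : ℕ) (h : H), v^[n] h = 1 → h ∈ K := by
  intro n
  induction n with
  | zero =>
    intro h hh
    simp at hh
    rw [hh]; exact one_mem K
  | succ n ih =>
    intro h hh
    have h1 : v h ∈ K := ih (v h) (by rwa [← Function.iterate_succ_apply])
    have := mul_mem (hu h) h1
    rwa [huv h] at this

lemma fitting [Finite H] (hH : DirectlyIndecomposable H)
    (v : H →* H) (hv : ∀ x y, v (x * y * x⁻¹) = x * v y * x⁻¹) :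
    Function.Surjective v ∨ ∃ n, 0 < n ∧ ∀ h, (⇑v)^[n] h = 1 := by
  have key : ∀ m n : ℕ, m < n → (⇑v)^[m] = (⇑v)^[n] →
      Function.Surjective v ∨ ∃ n, 0 < n ∧ ∀ h, (⇑v)^[n] h = 1 := by
    intro m n hmn heq
    set k := n - m with hk
    have hk1 : 0 < k := by omega
    have hstep : ∀ s, m ≤ s → (⇑v)^[s + k] = (⇑v)^[s] := by
      intro s hs
      have h1 : s + k = (s - m) + n := by omega
      have h2 : (s - m) + m = s := by omega
      rw [h1, Function.iterate_add, ← heq, ← Function.iterate_add, h2]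
    have hper : ∀ (t : ℕ) (s : ℕ), m ≤ s → (⇑v)^[s + t * k] = (⇑v)^[s] := by
      intro t
      induction t with
      | zero => intro s _; simp
      | succ t ih =>
        intro s hs
        have h1 : s + (t + 1) * k = (s + t * k) + k := by ring
        rw [h1, hstep _ (by omega), ih s hs]
    set N := (m + 1) * k with hN
    have hN1 : 0 < N := by positivity
    have hNm : m ≤ N := by
      calc m ≤ m + 1 := by omega
        _ ≤ (m + 1) * k := Nat.le_mul_of_pos_right _ hk1
    have h2N : (⇑v)^[N + N] = (⇑v)^[N] := by
      have := hper (m + 1) N hNm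
      rwa [← hN] at this
    set e : H → H := (⇑v)^[N] with he
    have hidem : ∀ x, e (e x) = e x := by
      intro x
      rw [he, ← Function.iterate_add_apply, h2N]
    set eh : H →* H := MonoidHom.mk' e (iter_map_mul v N) with heh
    have hehcoe : ∀ x, eh x = e x := fun _ => rfl
    set A := eh.range with hA
    set B := eh.ker with hB
    have hAmem : ∀ x, e x ∈ A := fun x => ⟨x, rfl⟩
    have hAnorm : ∀ (x : H), ∀ a ∈ A, x * a * x⁻¹ ∈ A := by
      rintro x a ⟨y, rfl⟩
      exact ⟨x * y * x⁻¹, (iter_norm v hv N x y).symm ▸ rfl⟩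
    have hinf : A ⊓ B = ⊥ := by
      rw [Subgroup.eq_bot_iff_forall]
      rintro x hx
      obtain ⟨⟨y, hy⟩, hxB⟩ := Subgroup.mem_inf.mp hx
      have hxB' : e x = 1 := hxB
      have : e x = x := by rw [← hy]; exact hidem y
      rw [← this, hxB']
    have hsup : A ⊔ B = ⊤ := by
      rw [Subgroup.eq_top_iff']
      intro x
      have h1 : e x ∈ A := hAmem x
      have h2 : (e x)⁻¹ * x ∈ B := by
        rw [hB, MonoidHom.mem_ker, map_mul, map_inv, hehcoe, hehcoe, hidem]
        simp
      have h3 : x = e x * ((e x)⁻¹ * x) := by group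
      rw [h3]
      exact mul_mem (Subgroup.mem_sup_left h1) (Subgroup.mem_sup_right h2)
    have hcomm : ∀ a ∈ A, ∀ b ∈ B, Commute a b := by
      intro a ha b hb
      have hzB : a * b * a⁻¹ * b⁻¹ ∈ B :=
        mul_mem ((eh.normal_ker).conj_mem b hb a) (inv_mem hb)
      have hzA : a * b * a⁻¹ * b⁻¹ ∈ A := by
        have h1 : b * a⁻¹ * b⁻¹ ∈ A := hAnorm b a⁻¹ (inv_mem ha)
        have h2 : a * (b * a⁻¹ * b⁻¹) ∈ A := mul_mem ha h1
        have h3 : a * b * a⁻¹ * b⁻¹ = a * (b * a⁻¹ * b⁻¹) := by group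
        rwa [h3]
      have hz : a * b * a⁻¹ * b⁻¹ = 1 := by
        have := Subgroup.mem_inf.mpr ⟨hzA, hzB⟩
        rw [hinf, Subgroup.mem_bot] at this
        exact this
      have : a * b * a⁻¹ = b := by
        rwa [mul_inv_eq_one] at hz
      show a * b = b * a
      exact mul_inv_eq_iff_eq_mul.mp this
    have hdisj : A = ⊥ ∨ B = ⊥ := by
      by_contra hcon
      push_neg at hcon
      exact hH.2 ⟨A, B, hcon.1, hcon.2, hcomm, hinf, hsup⟩
    rcases hdisj with hbot | hbot
    · right
      refine ⟨N, hN1, fun h => ?_⟩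
      have : e h ∈ A := hAmem h
      rw [hbot, Subgroup.mem_bot] at this
      exact this
    · left
      have hinj : Function.Injective v := by
        rw [injective_iff_map_eq_one]
        intro x hx
        have h1 : e x = 1 := by
          obtain ⟨N', hN'⟩ : ∃ N', N = N' + 1 := ⟨N - 1, by omega⟩
          rw [he, hN', Function.iterate_succ_apply, hx]
          exact Function.iterate_fixed (map_one v) N'
        have : x ∈ B := h1
        rwa [hbot, Subgroup.mem_bot] at this
      exact Finite.injective_iff_surjective.mp hinj
  obtain ⟨m, n, hmn, heq⟩ :=
    Finite.exists_ne_map_eq_of_infinite (fun n : ℕ => (⇑v)^[n])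
  rcases lt_or_gt_of_ne hmn with h | h
  · exact key m n h heq
  · exact key n m h heq.symm

end Helpers

section Key

variable {G H : Type} [Group G] [Group H]

lemma map_center_of_central (φ : (G × H) ≃* (G × H)) {w : G × H}
    (hw : ∀ x, x * w = w * x) : ∀ x, x * φ w = φ w * x := by
  intro x
  have : φ (φ.symm x * w) = φ (w * φ.symm x) := by rw [hw]
  simpa [map_mul] using this

lemma key [Finite G] [Finite H]
    (hG : DirectlyIndecomposable G) (hH : DirectlyIndecomposable H)
    (hHna : ¬ ∀ a b : H, a * b = b * a) (he : IsEmpty (G ≃* H))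
    (φ : (G × H) ≃* (G × H)) :
    ((⊤ : Subgroup G).prod (Subgroup.center H)).map φ.toMonoidHom ≤
      (⊤ : Subgroup G).prod (Subgroup.center H) := by
  set Φ := φ.toMonoidHom with hΦ
  set Ψ := φ.symm.toMonoidHom with hΨ
  set α : G →* G := (MonoidHom.fst G H).comp (Φ.comp (MonoidHom.inl G H)) with hα
  set β : G →* H := (MonoidHom.snd G H).comp (Φ.comp (MonoidHom.inl G H)) with hβd
  set γ : H →* G := (MonoidHom.fst G H).comp (Φ.comp (MonoidHom.inr G H)) with hγ
  set δ : H →* H := (MonoidHom.snd G H).comp (Φ.comp (MonoidHom.inr G H)) with hδ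
  set α' : G →* G := (MonoidHom.fst G H).comp (Ψ.comp (MonoidHom.inl G H)) with hα'
  set β' : G →* H := (MonoidHom.snd G H).comp (Ψ.comp (MonoidHom.inl G H)) with hβ'
  set γ' : H →* G := (MonoidHom.fst G H).comp (Ψ.comp (MonoidHom.inr G H)) with hγ'
  set δ' : H →* H := (MonoidHom.snd G H).comp (Ψ.comp (MonoidHom.inr G H)) with hδ'
  have hφl : ∀ g : G, φ (g, 1) = (α g, β g) := fun g => rfl
  have hφr : ∀ h : H, φ (1, h) = (γ h, δ h) := fun h => rfl
  have hψl : ∀ g : G, φ.symm (g, 1) = (α' g, β' g) := fun g => rfl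
  have hψr : ∀ h : H, φ.symm (1, h) = (γ' h, δ' h) := fun h => rfl
  -- commutation relations
  have hcommP : ∀ (g : G) (h : H), φ (g, 1) * φ (1, h) = φ (1, h) * φ (g, 1) := by
    intro g h
    rw [← map_mul, ← map_mul]
    congr 1
    simp [Prod.ext_iff]
  have hβδ : ∀ (g : G) (h : H), β g * δ h = δ h * β g := by
    intro g h
    have := congrArg Prod.snd (hcommP g h)
    simpa [hφl, hφr] using this
  have hαγ : ∀ (g : G) (h : H), α g * γ h = γ h * α g := by
    intro g h
    have := congrArg Prod.fst (hcommP g h)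
    simpa [hφl, hφr] using this
  -- identities from φ ∘ φ.symm = id
  have hsplit : ∀ (g : G) (h : H), φ (g, h) = (α g * γ h, β g * δ h) := by
    intro g h
    have h1 : ((g, h) : G × H) = (g, 1) * (1, h) := by simp
    rw [h1, map_mul, hφl, hφr]
    rfl
  have huv : ∀ h : H, β (γ' h) * δ (δ' h) = h := by
    intro h
    have h1 : φ (φ.symm (1, h)) = ((1 : G), h) := φ.apply_symm_apply _
    rw [hψr, hsplit] at h1
    exact congrArg Prod.snd h1
  have huv' : ∀ h : H, α (γ' h) * γ (δ' h) = 1 := by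
    intro h
    have h1 : φ (φ.symm (1, h)) = ((1 : G), h) := φ.apply_symm_apply _
    rw [hψr, hsplit] at h1
    exact congrArg Prod.fst h1
  have hpq : ∀ g : G, α (α' g) * γ (β' g) = g := by
    intro g
    have h1 : φ (φ.symm (g, 1)) = (g, (1 : H)) := φ.apply_symm_apply _
    rw [hψl, hsplit] at h1
    exact congrArg Prod.fst h1
  -- the main claim : β has image in the center of H
  have hmain : ∀ g : G, β g ∈ Subgroup.center H := by
    have hvnorm : ∀ x y, (δ.comp δ') (x * y * x⁻¹) = x * (δ.comp δ') y * x⁻¹ := by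
      refine aux_normal (K := β.range) (L := δ.range) ?_ (β.comp γ') (δ.comp δ') ?_ ?_ ?_
      · rintro k ⟨g, rfl⟩ l ⟨h, rfl⟩; exact hβδ g h
      · intro x; exact ⟨γ' x, rfl⟩
      · intro x; exact ⟨δ' x, rfl⟩
      · intro x; exact huv x
    rcases fitting hH (δ.comp δ') hvnorm with hsurj | ⟨n, _, htriv⟩
    · -- δ surjective, so range β commutes with everything
      intro g
      rw [Subgroup.mem_center_iff]
      intro h
      obtain ⟨x, hx⟩ := hsurj h
      rw [← hx]
      exact (hβδ g (δ' x)).symm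
    · -- β is surjective
      exfalso
      have hβsurj : Function.Surjective β := by
        intro h
        have : h ∈ β.range :=
          telescope β.range (β.comp γ') (δ.comp δ')
            (fun x => ⟨γ' x, rfl⟩) (fun x => huv x) n h (htriv h)
        obtain ⟨g, hg⟩ := this
        exact ⟨g, hg⟩
      have hqnorm : ∀ x y, (γ.comp β') (x * y * x⁻¹) = x * (γ.comp β') y * x⁻¹ := by
        refine aux_normal (K := α.range) (L := γ.range) ?_ (α.comp α') (γ.comp β') ?_ ?_ ?_
        · rintro k ⟨g, rfl⟩ l ⟨h, rfl⟩; exact hαγ g h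
        · intro x; exact ⟨α' x, rfl⟩
        · intro x; exact ⟨β' x, rfl⟩
        · intro x; exact hpq x
      rcases fitting hG (γ.comp β') hqnorm with hsurj | ⟨n', _, htriv'⟩
      · -- γ surjective : then G ≃* H, contradiction
        have hγsurj : Function.Surjective γ := by
          intro g
          obtain ⟨x, hx⟩ := hsurj g
          exact ⟨β' x, hx⟩
        have hcard : Nat.card G = Nat.card H :=
          le_antisymm (Nat.card_le_card_of_surjective γ hγsurj)
            (Nat.card_le_card_of_surjective β hβsurj)
        have hbij : Function.Bijective β :=
          (Nat.bijective_iff_surjective_and_card β).mpr ⟨hβsurj, hcard⟩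
        exact he.false (MulEquiv.ofBijective β hbij)
      · -- α surjective : then H is abelian, contradiction
        have hαsurj : Function.Surjective α := by
          intro g
          have : g ∈ α.range :=
            telescope α.range (α.comp α') (γ.comp β')
              (fun x => ⟨α' x, rfl⟩) (fun x => hpq x) n' g (htriv' g)
          obtain ⟨x, hx⟩ := this
          exact ⟨x, hx⟩
        apply hHna
        -- first : (1, h) is central in G × H for every h
        have hcent : ∀ h : H, ∀ x : G × H, x * ((1 : G), h) = ((1 : G), h) * x := by
          intro h x
          apply φ.injective
          rw [map_mul, map_mul]
          have hc : ∀ y : G × H, y * φ (1, h) = φ (1, h) * y := by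
            intro y
            rw [hφr]
            have h1 : y.1 * γ h = γ h * y.1 := by
              obtain ⟨g, hg⟩ := hαsurj y.1
              rw [← hg]; exact hαγ g h
            have h2 : y.2 * δ h = δ h * y.2 := by
              obtain ⟨g, hg⟩ := hβsurj y.2
              rw [← hg]; exact hβδ g h
            exact Prod.ext h1 h2
          exact hc (φ x)
        intro a b
        have := congrArg Prod.snd (hcent b ((1 : G), a))
        simpa using this
  -- conclude
  rintro x hx
  rw [Subgroup.mem_map] at hx
  obtain ⟨⟨g, z⟩, hmem, rfl⟩ := hx
  rw [Subgroup.mem_prod] at hmem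
  have hz : z ∈ Subgroup.center H := hmem.2
  rw [Subgroup.mem_prod]
  refine ⟨trivial, ?_⟩
  have h1 : Φ (g, z) = φ (g, 1) * φ (1, z) := by
    rw [← map_mul]
    show φ (g, z) = φ _
    congr 1
    simp
  have hδz : δ z ∈ Subgroup.center H := by
    rw [Subgroup.mem_center_iff]
    intro h
    have hzc : ∀ x : G × H, x * ((1 : G), z) = ((1 : G), z) * x := by
      intro x
      refine Prod.ext (by simp) ?_
      simpa using (Subgroup.mem_center_iff.mp hz x.2)
    have := map_center_of_central φ hzc ((1 : G), h)
    have := congrArg Prod.snd this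
    simpa [hφr] using this
  have : (Φ (g, z)).2 = β g * δ z := by rw [h1, hφl, hφr]; rfl
  rw [this]
  exact mul_mem (hmain g) hδz

end Key


/-- For finite directly indecomposable nonabelian groups `G` and `H`, the
subgroup `S = G × Z(H)` of `G × H` is invariant under every automorphism of `G × H` if and
only if `G` is not isomorphic to `H`. -/
theorem stmt12 (G H : Type) [Group G] [Group H] [Finite G] [Finite H]
    (hG : DirectlyIndecomposable G) (hH : DirectlyIndecomposable H)
    (hGna : ¬ ∀ a b : G, a * b = b * a) (hHna : ¬ ∀ a b : H, a * b = b * a) :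
    (∀ φ : (G × H) ≃* (G × H),
      ((⊤ : Subgroup G).prod (Subgroup.center H)).map φ.toMonoidHom =
        (⊤ : Subgroup G).prod (Subgroup.center H)) ↔
      IsEmpty (G ≃* H) := by
  constructor
  · intro hinv
    by_contra hne
    rw [not_isEmpty_iff] at hne
    obtain ⟨e⟩ := hne
    set φ : (G × H) ≃* (G × H) :=
      { toFun := fun x => (e.symm x.2, e x.1)
        invFun := fun x => (e.symm x.2, e x.1)
        left_inv := by intro x; simp
        right_inv := by intro x; simp
        map_mul' := by intro x y; simp [Prod.ext_iff] } with hφ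
    have hS := hinv φ
    apply hGna
    intro a b
    have hmem : ((a, 1) : G × H) ∈ (⊤ : Subgroup G).prod (Subgroup.center H) :=
      Subgroup.mem_prod.mpr ⟨trivial, one_mem _⟩
    have h1 : φ.toMonoidHom (a, 1) ∈
        ((⊤ : Subgroup G).prod (Subgroup.center H)).map φ.toMonoidHom :=
      Subgroup.mem_map.mpr ⟨(a, 1), hmem, rfl⟩
    rw [hS] at h1
    have h2 : e a ∈ Subgroup.center H := (Subgroup.mem_prod.mp h1).2
    have h3 : e (a * b) = e (b * a) := by
      rw [map_mul, map_mul, Subgroup.mem_center_iff.mp h2 (e b)]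
    exact e.injective h3
  · intro he φ
    have h1 := key hG hH hHna he φ
    have h2 := key hG hH hHna he φ.symm
    refine le_antisymm h1 ?_
    intro x hx
    have h3 : φ.symm x ∈ (⊤ : Subgroup G).prod (Subgroup.center H) :=
      h2 (Subgroup.mem_map.mpr ⟨x, hx, rfl⟩)
    exact Subgroup.mem_map.mpr ⟨φ.symm x, h3, φ.apply_symm_apply x⟩
end

section
/- Let G and H be finite directly indecomposable nonabelian groups that are not isomorphic. Then |Aut(G × H)| = |Aut(G)| · |Aut(H)| · |Hom(G, Z(H))| · |Hom(H, Z(G))|. -/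
section Aux

/-- In a finite monoid, some positive power of any element is idempotent. -/
lemma aux_exists_idem {M : Type*} [Monoid M] [Finite M] (a : M) :
    ∃ n, 0 < n ∧ a ^ n * a ^ n = a ^ n := by
  obtain ⟨m, n, hlt, heq⟩ : ∃ m n : ℕ, m < n ∧ a ^ m = a ^ n := by
    obtain ⟨m, n, hne, h⟩ := Finite.exists_ne_map_eq_of_infinite (fun k : ℕ => a ^ k)
    rcases hne.lt_or_gt with h1 | h1
    · exact ⟨m, n, h1, h⟩
    · exact ⟨n, m, h1, h.symm⟩
  set d := n - m with hd
  have hd1 : 0 < d := by omega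
  have hmd : m + d = n := by omega
  have step : ∀ s, a ^ (m + s + d) = a ^ (m + s) := by
    intro s
    have h2 : m + s + d = (m + d) + s := by ring
    rw [h2, pow_add, hmd, ← heq, ← pow_add]
  have steps : ∀ j s, a ^ (m + s + j * d) = a ^ (m + s) := by
    intro j
    induction j with
    | zero => simp
    | succ j ih =>
      intro s
      have h2 : m + s + (j + 1) * d = m + (s + d) + j * d := by ring
      rw [h2, ih (s + d), ← step s]
      congr 1
      ring
  refine ⟨(m + 1) * d, by positivity, ?_⟩
  have hge : m + 1 ≤ (m + 1) * d := Nat.le_mul_of_pos_right _ hd1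
  have hk : (m + 1) * d = m + ((m + 1) * d - m) := by omega
  have h2 : (m + 1) * d + (m + 1) * d = m + ((m + 1) * d - m) + (m + 1) * d := by omega
  rw [← pow_add, h2, steps (m + 1) ((m + 1) * d - m), ← hk]

variable {G : Type} [Group G] [Finite G]

/-- Fitting-type dichotomy: if `f₁` is a normal endomorphism of a finite directly
indecomposable group, and `f₁ g * f₂ g = g` for all `g`, then `f₁` or `f₂` is surjective. -/
lemma fitting_dichotomy (hG : DirectlyIndecomposable G) (f₁ f₂ : G →* G)
    (hn : ∀ x g, f₁ (x * g * x⁻¹) = x * f₁ g * x⁻¹)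
    (hsum : ∀ g, f₁ g * f₂ g = g) :
    Function.Surjective f₁ ∨ Function.Surjective f₂ := by
  let a : Monoid.End G := f₁
  haveI : Finite (Monoid.End G) :=
    Finite.of_injective (fun f : Monoid.End G => (f : G → G)) DFunLike.coe_injective
  obtain ⟨n, hn1, hidem⟩ := aux_exists_idem a
  set e : G →* G := (a ^ n : Monoid.End G) with he
  have hiter : ∀ g, e g = (⇑f₁)^[n] g := fun g => rfl
  have hee : ∀ g, e (e g) = e g := fun g =>
    congrArg (fun φ : Monoid.End G => φ g) hidem
  have hnorm_iter : ∀ k x g, (⇑f₁)^[k] (x * g * x⁻¹) = x * (⇑f₁)^[k] g * x⁻¹ := by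
    intro k
    induction k with
    | zero => intro x g; simp
    | succ k ih =>
      intro x g
      rw [Function.iterate_succ_apply', ih, hn, Function.iterate_succ_apply']
  have hnorm_e : ∀ x g, e (x * g * x⁻¹) = x * e g * x⁻¹ := by
    intro x g; rw [hiter, hiter, hnorm_iter]
  set A : Subgroup G := e.range with hA
  set B : Subgroup G := e.ker with hB
  have hinf : A ⊓ B = ⊥ := by
    rw [eq_bot_iff]
    intro x hx
    obtain ⟨⟨z, hz⟩, hx2⟩ := hx
    have : e x = x := by rw [← hz, hee]
    simp only [Subgroup.mem_bot]
    rw [← this]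
    simpa [hB, MonoidHom.mem_ker] using hx2
  have hsup : A ⊔ B = ⊤ := by
    rw [eq_top_iff]
    intro g _
    have h1 : e g ∈ A := ⟨g, rfl⟩
    have h2 : (e g)⁻¹ * g ∈ B := by
      have : e ((e g)⁻¹ * g) = 1 := by
        rw [map_mul, map_inv, hee]
        simp
      simpa [hB, MonoidHom.mem_ker] using this
    have := Subgroup.mul_mem_sup h1 h2
    simpa using this
  have hcomm : ∀ a ∈ A, ∀ b ∈ B, Commute a b := by
    intro a ha b hb
    have hb1 : e b = 1 := hb
    have hc1 : a * b * a⁻¹ * b⁻¹ ∈ B := by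
      have : e (a * b * a⁻¹ * b⁻¹) = 1 := by
        rw [map_mul, map_mul, map_mul, map_inv, map_inv, hb1]
        simp
      simpa [hB, MonoidHom.mem_ker] using this
    have hc2 : a * b * a⁻¹ * b⁻¹ ∈ A := by
      obtain ⟨z, hz⟩ := ha
      have h3 : b * a⁻¹ * b⁻¹ ∈ A := by
        refine ⟨b * z⁻¹ * b⁻¹, ?_⟩
        rw [hnorm_e, map_inv, hz]
      have h4 : a * (b * a⁻¹ * b⁻¹) ∈ A := A.mul_mem ⟨z, hz⟩ h3
      simpa [mul_assoc] using h4
    have : a * b * a⁻¹ * b⁻¹ ∈ A ⊓ B := ⟨hc2, hc1⟩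
    rw [hinf, Subgroup.mem_bot] at this
    have h5 : a * b = b * a := by
      have h6 : a * b * a⁻¹ = b := by
        rw [← mul_one (a * b * a⁻¹), ← inv_mul_cancel b, ← mul_assoc, this, one_mul]
      calc a * b = (a * b * a⁻¹) * a := by group
      _ = b * a := by rw [h6]
    exact h5
  by_cases hAbot : A = ⊥
  · -- f₁ is "nilpotent": e = f₁^[n] ≡ 1, so f₂ is surjective
    right
    have hnil : ∀ g, (⇑f₁)^[n] g = 1 := by
      intro g
      have : e g ∈ A := ⟨g, rfl⟩
      rw [hAbot, Subgroup.mem_bot] at this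
      rw [← hiter]; exact this
    have key : ∀ k g, ∃ c ∈ f₂.range, g = (⇑f₁)^[k] g * c := by
      intro k
      induction k with
      | zero => intro g; exact ⟨1, one_mem _, by simp⟩
      | succ k ih =>
        intro g
        obtain ⟨c, hc, hgc⟩ := ih g
        refine ⟨f₂ ((⇑f₁)^[k] g) * c, mul_mem ⟨_, rfl⟩ hc, ?_⟩
        rw [Function.iterate_succ_apply']
        calc g = (⇑f₁)^[k] g * c := hgc
        _ = (f₁ ((⇑f₁)^[k] g) * f₂ ((⇑f₁)^[k] g)) * c := by rw [hsum]
        _ = f₁ ((⇑f₁)^[k] g) * (f₂ ((⇑f₁)^[k] g) * c) := by rw [mul_assoc]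
    intro g
    obtain ⟨c, hc, hgc⟩ := key n g
    rw [hnil g, one_mul] at hgc
    obtain ⟨y, hy⟩ := hc
    exact ⟨y, by rw [hy, ← hgc]⟩
  · by_cases hBbot : B = ⊥
    · -- e injective, hence f₁ injective, hence surjective
      left
      have hinj_e : Function.Injective e := by
        have hk : e.ker = ⊥ := by rw [← hB]; exact hBbot
        exact (MonoidHom.ker_eq_bot_iff e).mp hk
      have hinj : Function.Injective f₁ := by
        intro a b hab
        apply hinj_e
        obtain ⟨m, rfl⟩ : ∃ m, n = m + 1 := ⟨n - 1, by omega⟩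
        rw [hiter, hiter, Function.iterate_succ_apply, Function.iterate_succ_apply, hab]
      exact Finite.injective_iff_surjective.mp hinj
    · exact absurd ⟨A, B, hAbot, hBbot, hcomm, hinf, hsup⟩ hG.2

/-- If `ζ : G →* G` has central values, then `g ↦ g * ζ g` is surjective for finite
indecomposable nonabelian `G`. -/
lemma sigma_surj (hG : DirectlyIndecomposable G)
    (hGna : ¬ ∀ a b : G, a * b = b * a) (ζ : G →* G) (hζ : ∀ g x, ζ g * x = x * ζ g) :
    Function.Surjective fun g => g * ζ g := by
  have hmul : ∀ a b : G, a * b * ζ (a * b) = (a * ζ a) * (b * ζ b) := by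
    intro a b
    rw [map_mul]
    calc a * b * (ζ a * ζ b) = a * (b * ζ a) * ζ b := by group
    _ = a * (ζ a * b) * ζ b := by rw [hζ]
    _ = (a * ζ a) * (b * ζ b) := by group
  have hmul2 : ∀ a b : G, (ζ (a * b))⁻¹ = (ζ a)⁻¹ * (ζ b)⁻¹ := by
    intro a b
    rw [map_mul, mul_inv_rev]
    have hcab : Commute (ζ a) (ζ b) := hζ a (ζ b)
    exact (hcab.inv_inv.eq).symm
  set f₁ : G →* G :=
    { toFun := fun g => g * ζ g, map_one' := by simp, map_mul' := hmul } with hf₁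
  set f₂ : G →* G :=
    { toFun := fun g => (ζ g)⁻¹, map_one' := by simp, map_mul' := hmul2 } with hf₂
  have hn : ∀ x g, f₁ (x * g * x⁻¹) = x * f₁ g * x⁻¹ := by
    intro x g
    show (x * g * x⁻¹) * ζ (x * g * x⁻¹) = x * (g * ζ g) * x⁻¹
    have h1 : ζ (x * g * x⁻¹) = ζ g := by
      rw [map_mul, map_mul, map_inv, hζ x (ζ g), mul_assoc, mul_inv_cancel, mul_one]
    rw [h1]
    calc x * g * x⁻¹ * ζ g = x * g * (x⁻¹ * ζ g) := by group
    _ = x * g * (ζ g * x⁻¹) := by rw [hζ]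
    _ = x * (g * ζ g) * x⁻¹ := by group
  have hsum : ∀ g, f₁ g * f₂ g = g := by
    intro g
    show (g * ζ g) * (ζ g)⁻¹ = g
    group
  rcases fitting_dichotomy hG f₁ f₂ hn hsum with h | h
  · exact h
  · exfalso
    apply hGna
    intro a b
    obtain ⟨c, hc⟩ := h a
    have hcom : Commute (ζ c) b := hζ c b
    have : Commute a b := by
      rw [← hc]
      exact hcom.inv_left
    exact this
end Aux

section Ext

variable {G H : Type} [Group G] [Group H]

/-- Component `G → G` of an automorphism of `G × H`. -/
def extA (φ : MulAut (G × H)) : G →* G :=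
  (MonoidHom.fst G H).comp (φ.toMonoidHom.comp (MonoidHom.inl G H))

/-- Component `H → G` of an automorphism of `G × H`. -/
def extB (φ : MulAut (G × H)) : H →* G :=
  (MonoidHom.fst G H).comp (φ.toMonoidHom.comp (MonoidHom.inr G H))

/-- Component `G → H` of an automorphism of `G × H`. -/
def extC (φ : MulAut (G × H)) : G →* H :=
  (MonoidHom.snd G H).comp (φ.toMonoidHom.comp (MonoidHom.inl G H))

/-- Component `H → H` of an automorphism of `G × H`. -/
def extD (φ : MulAut (G × H)) : H →* H :=
  (MonoidHom.snd G H).comp (φ.toMonoidHom.comp (MonoidHom.inr G H))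

lemma extA_apply (φ : MulAut (G × H)) (g : G) : extA φ g = (φ (g, 1)).1 := rfl
lemma extB_apply (φ : MulAut (G × H)) (h : H) : extB φ h = (φ (1, h)).1 := rfl
lemma extC_apply (φ : MulAut (G × H)) (g : G) : extC φ g = (φ (g, 1)).2 := rfl
lemma extD_apply (φ : MulAut (G × H)) (h : H) : extD φ h = (φ (1, h)).2 := rfl

lemma phi_eq (φ : MulAut (G × H)) (g : G) (h : H) :
    φ (g, h) = (extA φ g * extB φ h, extC φ g * extD φ h) := by
  have h1 : ((g, h) : G × H) = (g, 1) * (1, h) := by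
    simp [Prod.ext_iff]
  rw [h1, map_mul]
  rfl

lemma commAB (φ : MulAut (G × H)) (g : G) (h : H) :
    Commute (extA φ g) (extB φ h) := by
  have h1 : ((g, 1) : G × H) * (1, h) = (1, h) * (g, 1) := by
    simp [Prod.ext_iff]
  have h2 := congrArg φ h1
  rw [map_mul, map_mul] at h2
  have := congrArg Prod.fst h2
  simpa [extA_apply, extB_apply, Commute, SemiconjBy] using this

lemma commCD (φ : MulAut (G × H)) (g : G) (h : H) :
    Commute (extC φ g) (extD φ h) := by
  have h1 : ((g, 1) : G × H) * (1, h) = (1, h) * (g, 1) := by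
    simp [Prod.ext_iff]
  have h2 := congrArg φ h1
  rw [map_mul, map_mul] at h2
  have := congrArg Prod.snd h2
  simpa [extC_apply, extD_apply, Commute, SemiconjBy] using this

lemma symm_fst (φ : MulAut (G × H)) (g : G) :
    φ.symm (g, 1) = (extA φ.symm g, extC φ.symm g) := by
  have := phi_eq φ.symm g (1 : H)
  simpa using this

lemma symm_snd (φ : MulAut (G × H)) (h : H) :
    φ.symm (1, h) = (extB φ.symm h, extD φ.symm h) := by
  have := phi_eq φ.symm (1 : G) h
  simpa using this

lemma relG (φ : MulAut (G × H)) (g : G) :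
    extA φ (extA φ.symm g) * extB φ (extC φ.symm g) = g := by
  have h1 : φ (φ.symm (g, 1)) = (g, 1) := φ.apply_symm_apply _
  rw [symm_fst, phi_eq] at h1
  exact congrArg Prod.fst h1

lemma relH (φ : MulAut (G × H)) (h : H) :
    extC φ (extB φ.symm h) * extD φ (extD φ.symm h) = h := by
  have h1 : φ (φ.symm (1, h)) = (1, h) := φ.apply_symm_apply _
  rw [symm_snd, phi_eq] at h1
  exact congrArg Prod.snd h1

variable [Finite G] [Finite H]

/-- The key structural decomposition of automorphisms of `G × H`. -/
lemma decomp (hG : DirectlyIndecomposable G) (hH : DirectlyIndecomposable H)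
    (hGna : ¬ ∀ a b : G, a * b = b * a) (hHna : ¬ ∀ a b : H, a * b = b * a)
    (hniso : IsEmpty (G ≃* H)) (φ : MulAut (G × H)) :
    (∀ h, extB φ h ∈ Subgroup.center G) ∧ (∀ g, extC φ g ∈ Subgroup.center H) ∧
      Function.Bijective (extA φ) ∧ Function.Bijective (extD φ) := by
  -- G-side dichotomy
  have dG : Function.Surjective (extA φ) ∨ Function.Surjective (extB φ) := by
    set f₁ : G →* G := (extA φ).comp (extA φ.symm) with hf₁
    set f₂ : G →* G := (extB φ).comp (extC φ.symm) with hf₂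
    have hsum : ∀ g, f₁ g * f₂ g = g := fun g => relG φ g
    have hn : ∀ x g, f₁ (x * g * x⁻¹) = x * f₁ g * x⁻¹ := by
      intro x g
      have hhom : f₁ (x * g * x⁻¹) = f₁ x * f₁ g * (f₁ x)⁻¹ := by
        rw [map_mul, map_mul, map_inv]
      rw [hhom]
      have hx : f₁ x * f₂ x = x := hsum x
      have hc : Commute (f₁ g) (f₂ x) := commAB φ _ _
      calc f₁ x * f₁ g * (f₁ x)⁻¹
          = f₁ x * (f₁ g * f₂ x) * ((f₂ x)⁻¹ * (f₁ x)⁻¹) := by group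
      _ = f₁ x * (f₂ x * f₁ g) * ((f₂ x)⁻¹ * (f₁ x)⁻¹) := by rw [hc.eq]
      _ = (f₁ x * f₂ x) * f₁ g * (f₁ x * f₂ x)⁻¹ := by group
      _ = x * f₁ g * x⁻¹ := by rw [hx]
    rcases fitting_dichotomy hG f₁ f₂ hn hsum with h | h
    · left
      intro g
      obtain ⟨y, hy⟩ := h g
      exact ⟨extA φ.symm y, hy⟩
    · right
      intro g
      obtain ⟨y, hy⟩ := h g
      exact ⟨extC φ.symm y, hy⟩
  -- H-side dichotomy
  have dH : Function.Surjective (extC φ) ∨ Function.Surjective (extD φ) := by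
    set f₃ : H →* H := (extC φ).comp (extB φ.symm) with hf₃
    set f₄ : H →* H := (extD φ).comp (extD φ.symm) with hf₄
    have hsum : ∀ h, f₃ h * f₄ h = h := fun h => relH φ h
    have hn : ∀ x h, f₃ (x * h * x⁻¹) = x * f₃ h * x⁻¹ := by
      intro x h
      have hhom : f₃ (x * h * x⁻¹) = f₃ x * f₃ h * (f₃ x)⁻¹ := by
        rw [map_mul, map_mul, map_inv]
      rw [hhom]
      have hx : f₃ x * f₄ x = x := hsum x
      have hc : Commute (f₃ h) (f₄ x) := commCD φ _ _
      calc f₃ x * f₃ h * (f₃ x)⁻¹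
          = f₃ x * (f₃ h * f₄ x) * ((f₄ x)⁻¹ * (f₃ x)⁻¹) := by group
      _ = f₃ x * (f₄ x * f₃ h) * ((f₄ x)⁻¹ * (f₃ x)⁻¹) := by rw [hc.eq]
      _ = (f₃ x * f₄ x) * f₃ h * (f₃ x * f₄ x)⁻¹ := by group
      _ = x * f₃ h * x⁻¹ := by rw [hx]
    rcases fitting_dichotomy hH f₃ f₄ hn hsum with h | h
    · left
      intro h'
      obtain ⟨y, hy⟩ := h h'
      exact ⟨extB φ.symm y, hy⟩
    · right
      intro h'
      obtain ⟨y, hy⟩ := h h'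
      exact ⟨extD φ.symm y, hy⟩
  rcases dG with hA | hB
  · rcases dH with hC | hD
    · -- extA and extC surjective : H would be abelian, contradiction
      exfalso
      apply hHna
      have hBc : ∀ h, extB φ h ∈ Subgroup.center G := by
        intro h
        rw [Subgroup.mem_center_iff]
        intro x
        obtain ⟨g, rfl⟩ := hA x
        exact (commAB φ g h).eq
      have hDc : ∀ h, extD φ h ∈ Subgroup.center H := by
        intro h
        rw [Subgroup.mem_center_iff]
        intro x
        obtain ⟨g, rfl⟩ := hC x
        exact (commCD φ g h).eq
      intro a b
      have key : φ (1, a * b) = φ (1, b * a) := by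
        rw [phi_eq, phi_eq, map_one, map_mul, map_mul, map_one, map_mul, map_mul]
        have h1 : extB φ a * extB φ b = extB φ b * extB φ a :=
          (Subgroup.mem_center_iff.mp (hBc a) (extB φ b)).symm
        have h2 : extD φ a * extD φ b = extD φ b * extD φ a :=
          (Subgroup.mem_center_iff.mp (hDc a) (extD φ b)).symm
        rw [h1, h2]
      have := φ.injective key
      have := congrArg Prod.snd this
      simpa using this
    · -- main case : extA, extD surjective
      have hBc : ∀ h, extB φ h ∈ Subgroup.center G := by
        intro h
        rw [Subgroup.mem_center_iff]
        intro x
        obtain ⟨g, rfl⟩ := hA x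
        exact (commAB φ g h).eq
      have hCc : ∀ g, extC φ g ∈ Subgroup.center H := by
        intro g
        rw [Subgroup.mem_center_iff]
        intro x
        obtain ⟨h, rfl⟩ := hD x
        exact ((commCD φ g h).eq).symm
      exact ⟨hBc, hCc, ⟨Finite.injective_iff_surjective.mpr hA, hA⟩,
        ⟨Finite.injective_iff_surjective.mpr hD, hD⟩⟩
  · rcases dH with hC | hD
    · -- extB, extC surjective : G ≃* H, contradiction
      exfalso
      have hcomp : Function.Surjective ((extB φ).comp (extC φ)) := by
        intro g
        obtain ⟨h, hh⟩ := hB g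
        obtain ⟨g', hg'⟩ := hC h
        exact ⟨g', by simp [MonoidHom.comp_apply, hg', hh]⟩
      have hinj : Function.Injective ((extB φ).comp (extC φ)) :=
        Finite.injective_iff_surjective.mpr hcomp
      have hCinj : Function.Injective (extC φ) := fun a b hab => by
        apply hinj
        simp [MonoidHom.comp_apply, hab]
      exact hniso.false (MulEquiv.ofBijective (extC φ) ⟨hCinj, hC⟩)
    · -- extB, extD surjective : G would be abelian, contradiction
      exfalso
      apply hGna
      have hAc : ∀ g, extA φ g ∈ Subgroup.center G := by
        intro g
        rw [Subgroup.mem_center_iff]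
        intro x
        obtain ⟨h, rfl⟩ := hB x
        exact ((commAB φ g h).eq).symm
      have hCc : ∀ g, extC φ g ∈ Subgroup.center H := by
        intro g
        rw [Subgroup.mem_center_iff]
        intro x
        obtain ⟨h, rfl⟩ := hD x
        exact ((commCD φ g h).eq).symm
      intro a b
      have key : φ (a * b, 1) = φ (b * a, 1) := by
        rw [phi_eq, phi_eq, map_one, map_mul, map_mul, map_one, map_mul, map_mul]
        have h1 : extA φ a * extA φ b = extA φ b * extA φ a :=
          (Subgroup.mem_center_iff.mp (hAc a) (extA φ b)).symm
        have h2 : extC φ a * extC φ b = extC φ b * extC φ a :=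
          (Subgroup.mem_center_iff.mp (hCc a) (extC φ b)).symm
        rw [h1, h2]
      have := φ.injective key
      have := congrArg Prod.fst this
      simpa using this

/-- Building a (monoid) endomorphism of `G × H` from a matrix of components. -/
def buildHom (α : MulAut G) (δ : MulAut H) (γ : G →* Subgroup.center H)
    (β : H →* Subgroup.center G) : (G × H) →* (G × H) where
  toFun := fun p => (α p.1 * (β p.2 : G), (γ p.1 : H) * δ p.2)
  map_one' := by simp
  map_mul' := by
    rintro ⟨g, h⟩ ⟨g', h'⟩
    have hβ : ∀ x : G, x * (β h' : G) = (β h' : G) * x := fun x =>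
      Subgroup.mem_center_iff.mp (β h').2 x
    have hγ : ∀ x : H, x * (γ g' : H) = (γ g' : H) * x := fun x =>
      Subgroup.mem_center_iff.mp (γ g').2 x
    simp only [Prod.mk_mul_mk, map_mul, Prod.ext_iff]
    constructor
    · push_cast
      calc α g * α g' * ((β h : G) * (β h' : G))
          = α g * (α g' * (β h : G)) * (β h' : G) := by group
      _ = α g * ((β h : G) * α g') * (β h' : G) := by
            rw [Subgroup.mem_center_iff.mp (β h).2 (α g')]
      _ = α g * (β h : G) * (α g' * (β h' : G)) := by group
    · push_cast
      calc (γ g : H) * (γ g' : H) * (δ h * δ h')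
          = (γ g : H) * ((γ g' : H) * δ h) * δ h' := by group
      _ = (γ g : H) * (δ h * (γ g' : H)) * δ h' := by
            rw [← Subgroup.mem_center_iff.mp (γ g').2 (δ h)]
      _ = (γ g : H) * δ h * ((γ g' : H) * δ h') := by group

lemma buildHom_surj (hG : DirectlyIndecomposable G)
    (hGna : ¬ ∀ a b : G, a * b = b * a)
    (α : MulAut G) (δ : MulAut H) (γ : G →* Subgroup.center H)
    (β : H →* Subgroup.center G) :
    Function.Surjective (buildHom α δ γ β) := by
  -- the auxiliary central homomorphism
  have hν : ∀ a b : G,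
      (β (δ.symm (((γ (a * b) : H))⁻¹)) : G) =
        (β (δ.symm (((γ a : H))⁻¹)) : G) * (β (δ.symm (((γ b : H))⁻¹)) : G) := by
    intro a b
    have h1 : ((γ (a * b) : H))⁻¹ = ((γ a : H))⁻¹ * ((γ b : H))⁻¹ := by
      have hc : Commute ((γ a : H)) ((γ b : H)) :=
        Subgroup.mem_center_iff.mp (γ b).2 (γ a : H)
      rw [map_mul]
      push_cast
      rw [mul_inv_rev]
      exact (hc.inv_inv.eq).symm
    rw [h1, map_mul, map_mul]
    push_cast
    rfl
  set ζ : G →* G :=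
    { toFun := fun g => α.symm ((β (δ.symm (((γ g : H))⁻¹)) : G)),
      map_one' := by simp,
      map_mul' := fun a b => by rw [hν a b, map_mul] } with hζdef
  have hζc : ∀ g x, ζ g * x = x * ζ g := by
    intro g x
    apply α.injective
    rw [map_mul, map_mul]
    have h1 : α (ζ g) = (β (δ.symm (((γ g : H))⁻¹)) : G) := by
      show α (α.symm _) = _
      rw [MulEquiv.apply_symm_apply]
    rw [h1]
    exact (Subgroup.mem_center_iff.mp (β (δ.symm (((γ g : H))⁻¹))).2 (α x)).symm
  have hσ := sigma_surj hG hGna ζ hζc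
  rintro ⟨x, y⟩
  obtain ⟨g, hg⟩ := hσ (α.symm (x * ((β (δ.symm y) : G))⁻¹))
  refine ⟨(g, δ.symm (((γ g : H))⁻¹ * y)), ?_⟩
  have hαg : α g * (β (δ.symm (((γ g : H))⁻¹)) : G) = x * ((β (δ.symm y) : G))⁻¹ := by
    have := congrArg α hg
    rw [MulEquiv.apply_symm_apply] at this
    rw [← this, map_mul]
    congr 1
    show _ = α (α.symm _)
    rw [MulEquiv.apply_symm_apply]
  show (α g * (β (δ.symm (((γ g : H))⁻¹ * y)) : G), (γ g : H) * δ (δ.symm _)) = (x, y)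
  rw [MulEquiv.apply_symm_apply]
  refine Prod.ext ?_ (by group)
  rw [map_mul, map_mul]
  push_cast
  rw [← mul_assoc, hαg]
  group

end Ext

/-- For finite directly indecomposable nonabelian groups `G` and `H` that are
not isomorphic, `|Aut(G × H)| = |Aut G| · |Aut H| · |Hom(G, Z(H))| · |Hom(H, Z(G))|`. -/
theorem stmt13 (G H : Type) [Group G] [Group H] [Finite G] [Finite H]
    (hG : DirectlyIndecomposable G) (hH : DirectlyIndecomposable H)
    (hGna : ¬ ∀ a b : G, a * b = b * a) (hHna : ¬ ∀ a b : H, a * b = b * a)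
    (hniso : IsEmpty (G ≃* H)) :
    Nat.card (MulAut (G × H)) =
      Nat.card (MulAut G) * Nat.card (MulAut H) *
        Nat.card (G →* Subgroup.center H) * Nat.card (H →* Subgroup.center G) := by
  classical
  have key := decomp hG hH hGna hHna hniso
  have buildBij : ∀ (α : MulAut G) (δ : MulAut H) (γ : G →* Subgroup.center H)
      (β : H →* Subgroup.center G), Function.Bijective (buildHom α δ γ β) := by
    intro α δ γ β
    have hs := buildHom_surj hG hGna α δ γ β
    exact ⟨Finite.injective_iff_surjective.mpr hs, hs⟩
  let E : MulAut (G × H) ≃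
      MulAut G × MulAut H × (G →* Subgroup.center H) × (H →* Subgroup.center G) :=
    { toFun := fun φ =>
        (MulEquiv.ofBijective (extA φ) (key φ).2.2.1,
         MulEquiv.ofBijective (extD φ) (key φ).2.2.2,
         (extC φ).codRestrict (Subgroup.center H) (key φ).2.1,
         (extB φ).codRestrict (Subgroup.center G) (key φ).1),
      invFun := fun q =>
        MulEquiv.ofBijective (buildHom q.1 q.2.1 q.2.2.1 q.2.2.2)
          (buildBij q.1 q.2.1 q.2.2.1 q.2.2.2),
      left_inv := by
        intro φ
        apply MulEquiv.toEquiv_injective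
        apply Equiv.ext
        rintro ⟨g, h⟩
        show buildHom _ _ _ _ (g, h) = φ (g, h)
        rw [phi_eq]
        rfl
      right_inv := by
        rintro ⟨α, δ, γ, β⟩
        set Φ := MulEquiv.ofBijective (buildHom α δ γ β) (buildBij α δ γ β) with hΦ
        have hΦapp : ∀ p : G × H, Φ p = buildHom α δ γ β p := fun p => rfl
        have hA : extA Φ = (α : G →* G) := by
          ext g
          show (Φ (g, 1)).1 = α g
          rw [hΦapp]
          show α g * ((β 1 : Subgroup.center G) : G) = α g
          simp
        have hD : extD Φ = (δ : H →* H) := by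
          ext h
          show (Φ (1, h)).2 = δ h
          rw [hΦapp]
          show ((γ 1 : Subgroup.center H) : H) * δ h = δ h
          simp
        have hC : ∀ g, extC Φ g = (γ g : H) := by
          intro g
          show (Φ (g, 1)).2 = (γ g : H)
          rw [hΦapp]
          show ((γ g : Subgroup.center H) : H) * δ 1 = (γ g : H)
          simp
        have hB : ∀ h, extB Φ h = (β h : G) := by
          intro h
          show (Φ (1, h)).1 = (β h : G)
          rw [hΦapp]
          show α 1 * ((β h : Subgroup.center G) : G) = (β h : G)
          simp
        refine Prod.ext ?_ (Prod.ext ?_ (Prod.ext ?_ ?_))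
        · apply MulEquiv.toEquiv_injective
          apply Equiv.ext
          intro g
          show extA Φ g = α g
          rw [hA]; rfl
        · apply MulEquiv.toEquiv_injective
          apply Equiv.ext
          intro h
          show extD Φ h = δ h
          rw [hD]; rfl
        · ext g
          exact hC g
        · ext h
          exact hB h }
  rw [Nat.card_congr E, Nat.card_prod, Nat.card_prod, Nat.card_prod]
  ring
end

section
/- Let G and H be finite directly indecomposable nonabelian groups that are isomorphic. Then |Aut(G × H)| = 2 · |Aut(G)| · |Aut(H)| · |Hom(G, Z(H))| · |Hom(H, Z(G))|. -/
instance finMonoidHom {M N : Type*} [Monoid M] [Monoid N] [Finite M] [Finite N] :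
    Finite (M →* N) :=
  Finite.of_injective (fun f => (f : M → N)) (fun _ _ h => MonoidHom.ext (congrFun h))

instance finMonoidEnd {M : Type*} [Monoid M] [Finite M] : Finite (Monoid.End M) :=
  inferInstanceAs (Finite (M →* M))

/-- In a finite monoid, every element has a positive power that is idempotent. -/
theorem exists_idem_pow {M : Type*} [Monoid M] [Finite M] (a : M) :
    ∃ c, 0 < c ∧ a ^ c * a ^ c = a ^ c := by
  obtain ⟨m, n, hmn, h⟩ : ∃ m n : ℕ, m < n ∧ a ^ m = a ^ n := by
    obtain ⟨m, n, hne, h⟩ := Finite.exists_ne_map_eq_of_infinite (fun k : ℕ => a ^ k)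
    rcases hne.lt_or_gt with h' | h'
    · exact ⟨m, n, h', h⟩
    · exact ⟨n, m, h', h.symm⟩
  set d := n - m with hd
  have hd0 : 0 < d := Nat.sub_pos_of_lt hmn
  have key : ∀ j, m ≤ j → a ^ (j + d) = a ^ j := by
    intro j hj
    have h1 : j + d = (j - m) + n := by omega
    have h2 : j = (j - m) + m := by omega
    rw [h1, pow_add, ← h, ← pow_add, ← h2]
  have key2 : ∀ t j, m ≤ j → a ^ (j + t * d) = a ^ j := by
    intro t
    induction t with
    | zero => simp
    | succ t ih =>
      intro j hj
      have : j + (t + 1) * d = (j + d) + t * d := by ring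
      rw [this, ih (j + d) (by omega), key j hj]
  refine ⟨(m + 1) * d, by positivity, ?_⟩
  rw [← pow_add]
  exact key2 (m + 1) ((m + 1) * d) (by nlinarith)

section Fitting

variable {G : Type} [Group G]

/-- An idempotent normal endomorphism of a directly indecomposable group is
trivial or injective. -/
theorem idem_split (hind : DirectlyIndecomposable G) (f : G →* G)
    (hnorm : ∀ x y, f (x * y * x⁻¹) = x * f y * x⁻¹)
    (hidem : ∀ x, f (f x) = f x) :
    (∀ x, f x = 1) ∨ Function.Injective f := by
  set A := f.range with hA
  set B := f.ker with hB
  have hmemA : ∀ x, f x ∈ A := fun x => ⟨x, rfl⟩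
  have hinf : A ⊓ B = ⊥ := by
    rw [Subgroup.eq_bot_iff_forall]
    rintro x ⟨⟨y, rfl⟩, hxB⟩
    have : f (f y) = 1 := hxB
    rw [hidem] at this
    exact this
  have hAnormal : ∀ x a, a ∈ A → x * a * x⁻¹ ∈ A := by
    rintro x a ⟨y, rfl⟩
    exact ⟨x * y * x⁻¹, hnorm x y⟩
  have hBnormal : ∀ x b, b ∈ B → x * b * x⁻¹ ∈ B := by
    intro x b hb
    have hb' : f b = 1 := hb
    show f (x * b * x⁻¹) = 1
    rw [hnorm, hb', mul_one, mul_inv_cancel]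
  have hcomm : ∀ a ∈ A, ∀ b ∈ B, Commute a b := by
    intro a ha b hb
    have h1 : a * b * a⁻¹ * b⁻¹ ∈ A := by
      have : b * a⁻¹ * b⁻¹ ∈ A := hAnormal b a⁻¹ (A.inv_mem ha)
      have := A.mul_mem ha this
      convert this using 1; group
    have h2 : a * b * a⁻¹ * b⁻¹ ∈ B := by
      have : a * b * a⁻¹ ∈ B := hBnormal a b hb
      exact B.mul_mem this (B.inv_mem hb)
    have : a * b * a⁻¹ * b⁻¹ = 1 := by
      have := hinf ▸ (Subgroup.mem_inf.mpr ⟨h1, h2⟩)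
      simpa using this
    have h3 : a * b = b * a := by
      have h4 : a * b * a⁻¹ * b⁻¹ * (b * a) = 1 * (b * a) := by rw [this]
      calc a * b = a * b * a⁻¹ * b⁻¹ * (b * a) := by group
        _ = 1 * (b * a) := h4
        _ = b * a := one_mul _
    exact h3
  have hsup : A ⊔ B = ⊤ := by
    rw [Subgroup.eq_top_iff']
    intro x
    have hx : x = f x * ((f x)⁻¹ * x) := by group
    have h1 : f x ∈ A ⊔ B := Subgroup.mem_sup_left (hmemA x)
    have h2 : (f x)⁻¹ * x ∈ A ⊔ B := by
      refine Subgroup.mem_sup_right ?_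
      show f ((f x)⁻¹ * x) = 1
      rw [map_mul, map_inv, hidem, inv_mul_cancel]
    rw [hx]
    exact Subgroup.mul_mem _ h1 h2
  by_contra hcon
  push_neg at hcon
  obtain ⟨hnt, hni⟩ := hcon
  apply hind.2
  refine ⟨A, B, ?_, ?_, hcomm, hinf, hsup⟩
  · intro hAbot
    obtain ⟨x, hx⟩ := hnt
    exact hx (Subgroup.eq_bot_iff_forall _ |>.mp hAbot _ (hmemA x))
  · intro hBbot
    exact hni ((MonoidHom.ker_eq_bot_iff f).mp hBbot)

end Fitting

section Central

variable {G : Type} [Group G] [Finite G]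

/-- A central-valued endomorphism of a finite nonabelian directly indecomposable group
has no nontrivial fixed points. -/
theorem central_endo_fixed (hind : DirectlyIndecomposable G)
    (hna : ¬ ∀ a b : G, a * b = b * a) (f : G →* G)
    (hf : ∀ x, f x ∈ Subgroup.center G) {h : G} (hfix : f h = h) : h = 1 := by
  obtain ⟨c, hc0, hidem⟩ := exists_idem_pow (M := Monoid.End G) f
  set e : Monoid.End G := (show Monoid.End G from f) ^ c with he
  have hiter : ∀ x, e x = (⇑f)^[c] x := fun x => by
    rw [he, Monoid.End.coe_pow]; rfl
  have hecentral : ∀ x, e x ∈ Subgroup.center G := by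
    intro x
    rw [hiter]
    obtain ⟨c', rfl⟩ : ∃ c', c = c' + 1 := ⟨c - 1, by omega⟩
    rw [Function.iterate_succ_apply']
    exact hf _
  have heidem : ∀ x, e (e x) = e x := by
    intro x
    show (e * e) x = e x
    rw [he, hidem]
  have henorm : ∀ x y, e (x * y * x⁻¹) = x * e y * x⁻¹ := by
    intro x y
    have h1 : e (x * y * x⁻¹) = e x * e y * (e x)⁻¹ := by
      rw [map_mul, map_mul, map_inv]
    rw [h1]
    have hcz := Subgroup.mem_center_iff.mp (hecentral x)
    have h2 : e x * e y * (e x)⁻¹ = e y := by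
      rw [← hcz (e y)]; group
    rw [h2]
    have hcy := Subgroup.mem_center_iff.mp (hecentral y)
    calc e y = x * (x⁻¹ * e y) := by group
      _ = x * (e y * x⁻¹) := by rw [hcy x⁻¹]
      _ = x * e y * x⁻¹ := by group
  rcases idem_split hind e henorm heidem with htriv | hinj
  · have : e h = h := by rw [hiter]; exact Function.iterate_fixed hfix c
    rw [← this]; exact htriv h
  · exfalso
    apply hna
    have hsurj : Function.Surjective e := Finite.injective_iff_surjective.mp hinj
    intro a b
    obtain ⟨x, rfl⟩ := hsurj a
    exact ((Subgroup.mem_center_iff.mp (hecentral x)) b).symm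

/-- If `n g * m g = g` for all `g`, with commuting images, then `n` or `m` is bijective. -/
theorem bij_or_bij (hind : DirectlyIndecomposable G) (n m : G →* G)
    (hc : ∀ x y, n x * m y = m y * n x)
    (hid : ∀ g, n g * m g = g) :
    Function.Bijective n ∨ Function.Bijective m := by
  have hnorm : ∀ x y, n (x * y * x⁻¹) = x * n y * x⁻¹ := by
    intro x y
    have h1 : n (x * y * x⁻¹) = n x * n y * (n x)⁻¹ := by rw [map_mul, map_mul, map_inv]
    have h2 : x * n y * x⁻¹ = n x * m x * n y * (n x * m x)⁻¹ := by rw [hid]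
    rw [h1, h2, mul_inv_rev]
    have h3 : m x * n y = n y * m x := (hc y x).symm
    calc n x * n y * (n x)⁻¹
        = n x * (n y * m x) * ((m x)⁻¹ * (n x)⁻¹) := by group
      _ = n x * (m x * n y) * ((m x)⁻¹ * (n x)⁻¹) := by rw [h3]
      _ = n x * m x * n y * ((m x)⁻¹ * (n x)⁻¹) := by group
  have hiternorm : ∀ k x y, (⇑n)^[k] (x * y * x⁻¹) = x * (⇑n)^[k] y * x⁻¹ := by
    intro k
    induction k with
    | zero => intro x y; simp
    | succ k ih =>
      intro x y
      rw [Function.iterate_succ_apply, Function.iterate_succ_apply, hnorm x y]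
      exact ih x (n y)
  obtain ⟨c, hc0, hidem⟩ := exists_idem_pow (M := Monoid.End G) n
  set e : Monoid.End G := (show Monoid.End G from n) ^ c with he
  have hiter : ∀ x, e x = (⇑n)^[c] x := fun x => by rw [he, Monoid.End.coe_pow]; rfl
  have heidem : ∀ x, e (e x) = e x := by
    intro x
    show (e * e) x = e x
    rw [he, hidem]
  have henorm : ∀ x y, e (x * y * x⁻¹) = x * e y * x⁻¹ := by
    intro x y
    rw [hiter, hiter]
    exact hiternorm c x y
  rcases idem_split hind e henorm heidem with htriv | hinj
  · right
    rw [← Finite.surjective_iff_bijective]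
    intro x
    -- telescoping preimage
    have step : ∀ y, m y = (n y)⁻¹ * y := fun y => eq_inv_mul_iff_mul_eq.mpr (hid y)
    let t : ℕ → G := fun k => Nat.rec 1 (fun k acc => (⇑n)^[k] x * acc) k
    have ht : ∀ k, m (t k) = ((⇑n)^[k] x)⁻¹ * x := by
      intro k
      induction k with
      | zero => simp [t]
      | succ k ih =>
        show m ((⇑n)^[k] x * t k) = _
        rw [map_mul, ih, step, Function.iterate_succ_apply']
        group
    refine ⟨t c, ?_⟩
    rw [ht c, ← hiter, show e x = 1 from htriv x]
    group
  · left
    rw [← Finite.injective_iff_bijective]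
    intro a b hab
    apply hinj
    show e a = e b
    obtain ⟨c', rfl⟩ : ∃ c', c = c' + 1 := ⟨c - 1, by omega⟩
    rw [hiter, hiter, Function.iterate_succ_apply, Function.iterate_succ_apply, hab]

end Central

namespace Stmt14

variable {G H : Type} [Group G] [Group H]

/-- A multiplicative self-equivalence preserves the center. -/
theorem mulequiv_center (e : H ≃* H) {z : H} (hz : z ∈ Subgroup.center H) :
    e z ∈ Subgroup.center H := by
  rw [Subgroup.mem_center_iff] at hz ⊢
  intro w
  calc w * e z = e (e.symm w) * e z := by rw [e.apply_symm_apply]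
    _ = e (e.symm w * z) := (map_mul e _ _).symm
    _ = e (z * e.symm w) := by rw [hz (e.symm w)]
    _ = e z * w := by rw [map_mul, e.apply_symm_apply]

/-- The four matrix components of an automorphism of `G × H`. -/
def cA (φ : MulAut (G × H)) : G →* G :=
  (MonoidHom.fst G H).comp (φ.toMonoidHom.comp (MonoidHom.inl G H))

def cB (φ : MulAut (G × H)) : H →* G :=
  (MonoidHom.fst G H).comp (φ.toMonoidHom.comp (MonoidHom.inr G H))

def cC (φ : MulAut (G × H)) : G →* H :=
  (MonoidHom.snd G H).comp (φ.toMonoidHom.comp (MonoidHom.inl G H))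

def cD (φ : MulAut (G × H)) : H →* H :=
  (MonoidHom.snd G H).comp (φ.toMonoidHom.comp (MonoidHom.inr G H))

theorem phi_apply (φ : MulAut (G × H)) (g : G) (h : H) :
    φ (g, h) = (cA φ g * cB φ h, cC φ g * cD φ h) := by
  have h0 : ((g, h) : G × H) = (g, 1) * (1, h) := by simp
  rw [h0, map_mul]
  rfl

theorem comm1 (φ : MulAut (G × H)) (g : G) (h : H) :
    cB φ h * cA φ g = cA φ g * cB φ h := by
  have h1 : ((1, h) : G × H) * (g, 1) = (g, 1) * (1, h) := by simp
  have h2 := congrArg φ h1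
  rw [map_mul, map_mul] at h2
  exact congrArg Prod.fst h2

theorem comm2 (φ : MulAut (G × H)) (g : G) (h : H) :
    cD φ h * cC φ g = cC φ g * cD φ h := by
  have h1 : ((1, h) : G × H) * (g, 1) = (g, 1) * (1, h) := by simp
  have h2 := congrArg φ h1
  rw [map_mul, map_mul] at h2
  exact congrArg Prod.snd h2

theorem phi_inl (φ : MulAut (G × H)) (g : G) : φ (g, 1) = (cA φ g, cC φ g) := by
  rw [phi_apply]; simp

theorem phi_inr (φ : MulAut (G × H)) (h : H) : φ (1, h) = (cB φ h, cD φ h) := by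
  rw [phi_apply]; simp

theorem E1 (φ : MulAut (G × H)) (g : G) :
    cA φ.symm (cA φ g) * cB φ.symm (cC φ g) = g := by
  have h1 : φ.symm (φ (g, 1)) = (g, 1) := φ.symm_apply_apply _
  rw [phi_inl, phi_apply φ.symm] at h1
  exact congrArg Prod.fst h1

theorem E4 (φ : MulAut (G × H)) (h : H) :
    cC φ.symm (cB φ h) * cD φ.symm (cD φ h) = h := by
  have h1 : φ.symm (φ (1, h)) = (1, h) := φ.symm_apply_apply _
  rw [phi_inr, phi_apply φ.symm] at h1
  exact congrArg Prod.snd h1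

section Dichotomy

variable [Finite G] [Finite H]

theorem dichotomy (hG : DirectlyIndecomposable G) (hH : DirectlyIndecomposable H)
    (hGna : ¬ ∀ a b : G, a * b = b * a) (hHna : ¬ ∀ a b : H, a * b = b * a)
    (hiso : Nonempty (G ≃* H)) (φ : MulAut (G × H)) :
    (Function.Bijective (cA φ) ∧ Function.Bijective (cD φ) ∧
      (∀ h, cB φ h ∈ Subgroup.center G) ∧ (∀ g, cC φ g ∈ Subgroup.center H)) ∨
    (Function.Bijective (cB φ) ∧ Function.Bijective (cC φ) ∧
      (∀ g, cA φ g ∈ Subgroup.center G) ∧ (∀ h, cD φ h ∈ Subgroup.center H)) := by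
  by_cases hbij : Function.Bijective ((cA φ.symm).comp (cA φ))
  · -- untwisted case
    left
    have hαinj : Function.Injective (cA φ) := fun a b hab => by
      apply hbij.1
      simp only [MonoidHom.comp_apply, hab]
    have hα : Function.Bijective (cA φ) := Finite.injective_iff_bijective.mp hαinj
    have hα'surj : Function.Surjective (cA φ.symm) := fun x => by
      obtain ⟨y, hy⟩ := hbij.2 x
      exact ⟨cA φ y, hy⟩
    have hβcent : ∀ h, cB φ h ∈ Subgroup.center G := by
      intro h
      rw [Subgroup.mem_center_iff]
      intro k
      obtain ⟨x, rfl⟩ := hα.2 k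
      exact (comm1 φ x h).symm ▸ comm1 φ x h
    have hβ'cent : ∀ h, cB φ.symm h ∈ Subgroup.center G := by
      intro h
      rw [Subgroup.mem_center_iff]
      intro k
      obtain ⟨x, rfl⟩ := hα'surj k
      exact (comm1 φ.symm x h).symm
    -- second application on the H side
    rcases bij_or_bij hH ((cC φ.symm).comp (cB φ)) ((cD φ.symm).comp (cD φ))
        (fun x y => (comm2 φ.symm (cB φ x) (cD φ y)).symm)
        (fun h => E4 φ h) with hn | hm
    · exfalso
      apply hHna
      have hβinj : Function.Injective (cB φ) := fun a b hab => by
        apply hn.1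
        simp only [MonoidHom.comp_apply, hab]
      intro a b
      apply hβinj
      rw [map_mul, map_mul]
      exact Subgroup.mem_center_iff.mp (hβcent b) (cB φ a)
    · have hδinj : Function.Injective (cD φ) := fun a b hab => by
        apply hm.1
        simp only [MonoidHom.comp_apply, hab]
      have hδ : Function.Bijective (cD φ) := Finite.injective_iff_bijective.mp hδinj
      have hγcent : ∀ g, cC φ g ∈ Subgroup.center H := by
        intro g
        rw [Subgroup.mem_center_iff]
        intro k
        obtain ⟨x, rfl⟩ := hδ.2 k
        exact comm2 φ g x
      exact ⟨hα, hδ, hβcent, hγcent⟩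
  · -- twisted case
    right
    obtain ⟨e⟩ := hiso
    have happ1 := bij_or_bij hG ((cA φ.symm).comp (cA φ)) ((cB φ.symm).comp (cC φ))
        (fun x y => (comm1 φ.symm (cA φ x) (cC φ y)).symm)
        (fun g => E1 φ g)
    have hβ'γ : Function.Bijective ((cB φ.symm).comp (cC φ)) := happ1.resolve_left hbij
    have hγinj : Function.Injective (cC φ) := fun a b hab => by
      apply hβ'γ.1
      simp only [MonoidHom.comp_apply, hab]
    have happ2 := bij_or_bij hG ((cA φ).comp (cA φ.symm)) ((cB φ).comp (cC φ.symm))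
        (fun x y => (comm1 φ (cA φ.symm x) (cC φ.symm y)).symm)
        (fun g => by simpa using E1 φ.symm g)
    have hβγ' : Function.Bijective ((cB φ).comp (cC φ.symm)) := by
      refine happ2.resolve_left ?_
      intro hαα'
      apply hbij
      have hαsurj : Function.Surjective (cA φ) := fun x => by
        obtain ⟨y, hy⟩ := hαα'.2 x
        exact ⟨cA φ.symm y, hy⟩
      have hα : Function.Bijective (cA φ) := Finite.surjective_iff_bijective.mp hαsurj
      have hα'inj : Function.Injective (cA φ.symm) := fun a b hab => by
        apply hαα'.1
        simp only [MonoidHom.comp_apply, hab]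
      have hα' : Function.Bijective (cA φ.symm) := Finite.injective_iff_bijective.mp hα'inj
      exact hα'.comp hα
    have hβsurj : Function.Surjective (cB φ) := fun x => by
      obtain ⟨y, hy⟩ := hβγ'.2 x
      exact ⟨cC φ.symm y, hy⟩
    have hβ : Function.Bijective (cB φ) :=
      ⟨(Finite.injective_iff_surjective_of_equiv e.toEquiv.symm).mpr hβsurj, hβsurj⟩
    have hγ : Function.Bijective (cC φ) :=
      ⟨hγinj, (Finite.injective_iff_surjective_of_equiv e.toEquiv).mp hγinj⟩
    have hαcent : ∀ g, cA φ g ∈ Subgroup.center G := by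
      intro g
      rw [Subgroup.mem_center_iff]
      intro k
      obtain ⟨x, rfl⟩ := hβ.2 k
      exact comm1 φ g x
    have hδcent : ∀ h, cD φ h ∈ Subgroup.center H := by
      intro h
      rw [Subgroup.mem_center_iff]
      intro k
      obtain ⟨x, rfl⟩ := hγ.2 k
      exact (comm2 φ x h).symm ▸ comm2 φ x h
    exact ⟨hβ, hγ, hαcent, hδcent⟩

end Dichotomy

section Theta

theorem swap_mid {M : Type*} [Monoid M] (x y z w : M) (h : y * z = z * y) :
    x * y * (z * w) = x * z * (y * w) := by
  rw [mul_assoc, ← mul_assoc y, h, mul_assoc, ← mul_assoc]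

/-- The "matrix" endomorphism of `G × H` built from an untwisted tuple. -/
def theta (a : MulAut G) (b : MulAut H) (c : G →* Subgroup.center H)
    (d : H →* Subgroup.center G) : (G × H) →* (G × H) :=
  MonoidHom.mk' (fun p => (a p.1 * ((d p.2 : G)), ((c p.1 : H)) * b p.2)) (by
    rintro ⟨g1, h1⟩ ⟨g2, h2⟩
    simp only [Prod.mk_mul_mk, map_mul, Subgroup.coe_mul]
    refine Prod.ext ?_ ?_
    · exact swap_mid (a g1) (a g2) ((d h1 : G)) ((d h2 : G))
        (Subgroup.mem_center_iff.mp (d h1).2 (a g2))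
    · exact swap_mid ((c g1 : H)) ((c g2 : H)) (b h1) ((b h2 : H))
        (Subgroup.mem_center_iff.mp (c g2).2 (b h1)).symm)

theorem theta_apply (a : MulAut G) (b : MulAut H) (c : G →* Subgroup.center H)
    (d : H →* Subgroup.center G) (g : G) (h : H) :
    theta a b c d (g, h) = (a g * ((d h : G)), ((c g : H)) * b h) := rfl

open scoped IsMulCommutative in
theorem theta_injective [Finite G] [Finite H] (hH : DirectlyIndecomposable H)
    (hHna : ¬ ∀ a b : H, a * b = b * a)
    (a : MulAut G) (b : MulAut H) (c : G →* Subgroup.center H)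
    (d : H →* Subgroup.center G) : Function.Injective (theta a b c d) := by
  rw [injective_iff_map_eq_one]
  rintro ⟨g, h⟩ hgh
  rw [theta_apply, Prod.mk_eq_one] at hgh
  obtain ⟨h1, h2⟩ := hgh
  -- the central-valued endomorphism of H
  let f : H →* H := (b.symm.toMonoidHom.comp ((Subgroup.center H).subtype.comp
    (invMonoidHom.comp (c.comp (a.symm.toMonoidHom.comp
      ((Subgroup.center G).subtype.comp (invMonoidHom.comp d)))))))
  have f_apply : ∀ x, f x = b.symm ((c (a.symm ((d x : G)⁻¹)) : H)⁻¹) := fun x => rfl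
  have hfcent : ∀ x, f x ∈ Subgroup.center H := by
    intro x
    rw [f_apply]
    exact mulequiv_center b.symm (Subgroup.inv_mem _ (c _).2)
  have hfix : f h = h := by
    rw [f_apply]
    have hg : a.symm (((d h : G))⁻¹) = g := by
      rw [← eq_inv_of_mul_eq_one_left h1, a.symm_apply_apply]
    rw [hg, ← eq_inv_of_mul_eq_one_right h2, b.symm_apply_apply]
  have hh1 : h = 1 := central_endo_fixed hH hHna f hfcent hfix
  subst hh1
  have hg1 : g = 1 := by
    apply a.injective
    simpa using h1
  subst hg1
  rfl

end Theta

end Stmt14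


open Stmt14

/-- For finite directly indecomposable nonabelian groups `G` and `H` that are
isomorphic, `|Aut(G × H)| = 2 · |Aut G| · |Aut H| · |Hom(G, Z(H))| · |Hom(H, Z(G))|`. -/
theorem stmt14 (G H : Type) [Group G] [Group H] [Finite G] [Finite H]
    (hG : DirectlyIndecomposable G) (hH : DirectlyIndecomposable H)
    (hGna : ¬ ∀ a b : G, a * b = b * a) (hHna : ¬ ∀ a b : H, a * b = b * a)
    (hiso : Nonempty (G ≃* H)) :
    Nat.card (MulAut (G × H)) =
      2 * Nat.card (MulAut G) * Nat.card (MulAut H) *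
        Nat.card (G →* Subgroup.center H) * Nat.card (H →* Subgroup.center G) := by
  classical
  obtain ⟨e⟩ := hiso
  have hbij : ∀ (a : MulAut G) (b : MulAut H) (c : G →* Subgroup.center H)
      (d : H →* Subgroup.center G), Function.Bijective (theta a b c d) :=
    fun a b c d => Finite.injective_iff_bijective.mp (theta_injective hH hHna a b c d)
  let σ : MulAut (G × H) := (MulEquiv.prodComm).trans (MulEquiv.prodCongr e.symm e)
  have σ_apply : ∀ (g : G) (h : H), σ (g, h) = (e.symm h, e g) := fun g h => rfl
  let mk : MulAut G × MulAut H × (G →* Subgroup.center H) × (H →* Subgroup.center G) →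
      MulAut (G × H) := fun q => MulEquiv.ofBijective _ (hbij q.1 q.2.1 q.2.2.1 q.2.2.2)
  have mk_apply : ∀ q g h,
      mk q (g, h) = (q.1 g * ((q.2.2.2 h : G)), ((q.2.2.1 g : H)) * q.2.1 h) :=
    fun q g h => rfl
  let Φ : (MulAut G × MulAut H × (G →* Subgroup.center H) × (H →* Subgroup.center G)) × Bool →
      MulAut (G × H) := fun p => cond p.2 (σ.trans (mk p.1)) (mk p.1)
  have mk_inj : Function.Injective mk := by
    rintro ⟨a, b, c, d⟩ ⟨a', b', c', d'⟩ hqq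
    have key : ∀ g h, ((a g * ((d h : G)), ((c g : H)) * b h) : G × H)
        = (a' g * ((d' h : G)), ((c' g : H)) * b' h) := by
      intro g h
      have := DFunLike.congr_fun hqq (g, h)
      exact this
    have h1 : ∀ g, a g = a' g := fun g => by
      have := congrArg Prod.fst (key g 1)
      simpa using this
    have h2 : ∀ g, c g = c' g := fun g => by
      have := congrArg Prod.snd (key g 1)
      simp only [map_one, mul_one, OneMemClass.coe_one] at this
      exact Subtype.ext (by simpa using this)
    have h3 : ∀ h, d h = d' h := fun h => by
      have := congrArg Prod.fst (key 1 h)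
      simp only [map_one, one_mul] at this
      exact Subtype.ext (by simpa using this)
    have h4 : ∀ h, b h = b' h := fun h => by
      have := congrArg Prod.snd (key 1 h)
      simpa using this
    have e1 : a = a' := MulEquiv.ext h1
    have e2 : b = b' := MulEquiv.ext h4
    have e3 : c = c' := MonoidHom.ext h2
    have e4 : d = d' := MonoidHom.ext h3
    rw [e1, e2, e3, e4]
  have no_mix : ∀ q q', mk q ≠ σ.trans (mk q') := by
    intro q q' hmix
    apply hGna
    have hcent : ∀ g : G, q.1 g ∈ Subgroup.center G := by
      intro g
      have hx : mk q (g, 1) = (σ.trans (mk q')) (g, 1) := by rw [hmix]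
      rw [MulEquiv.trans_apply, σ_apply] at hx
      have hx2 : mk q (g, 1) = mk q' (1, e g) := by
        rw [hx]
        congr 1
        simp
      rw [mk_apply, mk_apply] at hx2
      have hx3 := congrArg Prod.fst hx2
      simp only [map_one, mul_one, one_mul, OneMemClass.coe_one] at hx3
      have : q.1 g = ((q'.2.2.2 (e g) : G)) := by simpa using hx3
      rw [this]
      exact (q'.2.2.2 (e g)).2
    intro u v
    obtain ⟨x, rfl⟩ := q.1.surjective u
    exact (Subgroup.mem_center_iff.mp (hcent x) v).symm
  have hΦbij : Function.Bijective Φ := by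
    constructor
    · rintro ⟨q, s⟩ ⟨q', s'⟩ hpq
      cases s <;> cases s'
      · have : mk q = mk q' := hpq
        rw [mk_inj this]
      · exact absurd hpq (no_mix q q')
      · exact absurd hpq.symm (no_mix q' q)
      · have h0 : σ.trans (mk q) = σ.trans (mk q') := hpq
        have : mk q = mk q' := by
          apply MulEquiv.ext
          intro x
          obtain ⟨y, rfl⟩ := σ.surjective x
          exact DFunLike.congr_fun h0 y
        rw [mk_inj this]
    · intro φ
      rcases dichotomy hG hH hGna hHna ⟨e⟩ φ with ⟨hA, hD2, hB, hC⟩ | ⟨hB, hC, hA, hD2⟩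
      · refine ⟨((MulEquiv.ofBijective (cA φ) hA, MulEquiv.ofBijective (cD φ) hD2,
          (cC φ).codRestrict (Subgroup.center H) hC,
          (cB φ).codRestrict (Subgroup.center G) hB), false), ?_⟩
        show mk _ = φ
        apply MulEquiv.ext
        rintro ⟨g, h⟩
        rw [mk_apply, phi_apply φ g h]
        rfl
      · refine ⟨((MulEquiv.ofBijective ((cB φ).comp e.toMonoidHom) (hB.comp e.bijective),
          MulEquiv.ofBijective ((cC φ).comp e.symm.toMonoidHom) (hC.comp e.symm.bijective),
          ((cD φ).comp e.toMonoidHom).codRestrict (Subgroup.center H) (fun g => hD2 (e g)),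
          ((cA φ).comp e.symm.toMonoidHom).codRestrict (Subgroup.center G)
            (fun h => hA (e.symm h))), true), ?_⟩
        show σ.trans (mk _) = φ
        apply MulEquiv.ext
        rintro ⟨g, h⟩
        rw [MulEquiv.trans_apply, σ_apply, mk_apply, phi_apply φ g h]
        have k1 : cB φ (e (e.symm h)) = cB φ h := by rw [e.apply_symm_apply]
        have k2 : cA φ (e.symm (e g)) = cA φ g := by rw [e.symm_apply_apply]
        have k3 : cD φ (e (e.symm h)) = cD φ h := by rw [e.apply_symm_apply]
        have k4 : cC φ (e.symm (e g)) = cC φ g := by rw [e.symm_apply_apply]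
        show (cB φ (e (e.symm h)) * cA φ (e.symm (e g)),
          cD φ (e (e.symm h)) * cC φ (e.symm (e g))) = _
        rw [k1, k2, k3, k4, comm1 φ g h, comm2 φ g h]
  have hcard := Nat.card_eq_of_bijective Φ hΦbij
  rw [← hcard]
  simp only [Nat.card_prod]
  have hbool : Nat.card Bool = 2 := by simp [Nat.card_eq_fintype_card]
  rw [hbool]
  ring
end

section
/- Let A be a characteristic abelian subgroup of a finite group G that is characteristically complemented by H ≤ G (meaning A ∩ H = 1, AH = G, and for every automorphism φ of G the subgroup φ(H) is conjugate to H in G). Let A_p be the Sylow p-subgroup of A and A_{p'} the product of the other Sylow subgroups of A. Then A_p is a characteristic abelian p-subgroup of G and is characteristically complemented by A_{p'}H. -/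
open scoped Pointwise


/-- Let `A` be a characteristic abelian subgroup of a finite group `G` that is
characteristically complemented by `H ≤ G`. If `A_p` is the Sylow `p`-subgroup of `A` and
`A_{p'}` the product of the other Sylow subgroups of `A`, then `A_p` is a characteristic
abelian `p`-subgroup of `G` which is characteristically complemented by `A_{p'}H`. -/
theorem stmt16 (G : Type) [Group G] [Finite G] (p : ℕ) (hp : p.Prime)
    (A H Ap Ap' : Subgroup G)
    (hAchar : A.Characteristic) (hAcomm : IsMulCommutative A)
    (hint : A ⊓ H = ⊥)
    (hprod : ∀ g : G, ∃ a ∈ A, ∃ h ∈ H, g = a * h)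
    (hcc : ∀ φ : MulAut G, ∃ x : G,
      H.map φ.toMonoidHom = H.map (MulAut.conj x).toMonoidHom)
    (hAp : ∀ x : G, x ∈ Ap ↔ x ∈ A ∧ ∃ n : ℕ, orderOf x = p ^ n)
    (hAp' : ∀ x : G, x ∈ Ap' ↔ x ∈ A ∧ ¬ p ∣ orderOf x) :
    Ap.Characteristic ∧ IsMulCommutative Ap ∧ IsPGroup p Ap ∧
    Ap ⊓ (Ap' ⊔ H) = ⊥ ∧
    (∀ g : G, ∃ a ∈ Ap, ∃ b ∈ Ap' ⊔ H, g = a * b) ∧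
    (∀ φ : MulAut G, ∃ x : G,
      (Ap' ⊔ H).map φ.toMonoidHom = (Ap' ⊔ H).map (MulAut.conj x).toMonoidHom) := by
  have hmemA : ∀ (φ : MulAut G) (x : G), φ x ∈ A ↔ x ∈ A := by
    intro φ x
    simpa using SetLike.ext_iff.mp (hAchar.fixed φ) x
  have hord : ∀ (φ : MulAut G) (x : G), orderOf (φ x) = orderOf x := fun φ x =>
    orderOf_injective φ.toMonoidHom φ.injective x
  have hApchar : Ap.Characteristic := ⟨fun φ => by
    ext x
    rw [Subgroup.mem_comap]
    show φ x ∈ Ap ↔ x ∈ Ap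
    rw [hAp, hAp, hmemA, hord]⟩
  have hAp'char : Ap'.Characteristic := ⟨fun φ => by
    ext x
    rw [Subgroup.mem_comap]
    show φ x ∈ Ap' ↔ x ∈ Ap'
    rw [hAp', hAp', hmemA, hord]⟩
  have hcomm : ∀ a ∈ A, ∀ b ∈ A, a * b = b * a := fun a ha b hb =>
    congrArg Subtype.val (hAcomm.is_comm.comm ⟨a, ha⟩ ⟨b, hb⟩)
  have hApleA : Ap ≤ A := fun x hx => ((hAp x).1 hx).1
  have hAp'leA : Ap' ≤ A := fun x hx => ((hAp' x).1 hx).1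
  have hApcomm : IsMulCommutative Ap := ⟨⟨fun a b =>
    Subtype.ext (hcomm a (hApleA a.2) b (hApleA b.2))⟩⟩
  have hpAp : IsPGroup p Ap := by
    intro g
    obtain ⟨-, n, hn⟩ := (hAp (g : G)).1 g.2
    refine ⟨n, ?_⟩
    have : (g : G) ^ p ^ n = 1 := by rw [← hn]; exact pow_orderOf_eq_one _
    exact Subtype.ext (by push_cast; exact this)
  -- triviality of Ap ⊓ Ap'
  have hApAp' : ∀ x : G, x ∈ Ap → x ∈ Ap' → x = 1 := by
    intro x hxp hxp'
    obtain ⟨-, n, hn⟩ := (hAp x).1 hxp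
    obtain ⟨-, hnd⟩ := (hAp' x).1 hxp'
    rcases Nat.eq_zero_or_pos n with h0 | hpos
    · subst h0; simpa using orderOf_eq_one_iff.mp (by simpa using hn)
    · exact absurd (hn ▸ dvd_pow_self p hpos.ne') hnd
  haveI : Ap'.Normal := @Subgroup.normal_of_characteristic _ _ _ hAp'char
  refine ⟨hApchar, hApcomm, hpAp, ?_, ?_, ?_⟩
  · -- intersection trivial
    rw [eq_bot_iff]
    intro x ⟨hxp, hxs⟩
    have : x ∈ (Ap' : Set G) * (H : Set G) := by
      rw [← Subgroup.normal_mul]; exact hxs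
    obtain ⟨a', ha', h, hh, rfl⟩ := this
    have hhA : h ∈ A := by
      have : a'⁻¹ * (a' * h) ∈ A :=
        A.mul_mem (A.inv_mem (hAp'leA ha')) (hApleA hxp)
      simpa using this
    have hh1 : h = 1 := by
      have : h ∈ A ⊓ H := ⟨hhA, hh⟩
      rw [hint] at this; exact this
    subst hh1
    simp only [mul_one] at hxp ⊢
    exact Subgroup.mem_bot.mpr (hApAp' a' hxp ha')
  · -- product decomposition
    intro g
    obtain ⟨a, ha, h, hh, rfl⟩ := hprod g
    have hne : orderOf a ≠ 0 := (orderOf_pos a).ne'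
    obtain ⟨k, m, hmn, hpm⟩ : ∃ k m, p ^ k * m = orderOf a ∧ ¬ p ∣ m :=
      ⟨_, _, Nat.ordProj_mul_ordCompl_eq_self _ p, Nat.not_dvd_ordCompl hp hne⟩
    have hcop : Nat.Coprime (p ^ k) m :=
      Nat.Coprime.pow_left _ (hp.coprime_iff_not_dvd.mpr hpm)
    obtain ⟨u, v, huv⟩ := Nat.isCoprime_iff_coprime.mpr hcop
    push_cast at huv
    have hsplit : a = a ^ ((m : ℤ) * v) * a ^ ((p : ℤ) ^ k * u) := by
      have he : (m : ℤ) * v + (p : ℤ) ^ k * u = 1 := by linear_combination huv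
      rw [← zpow_add, he, zpow_one]
    refine ⟨a ^ ((m : ℤ) * v), ?_, a ^ ((p : ℤ) ^ k * u) * h, ?_, ?_⟩
    · rw [hAp]
      refine ⟨A.zpow_mem ha _, ?_⟩
      have hpow : (a ^ ((m : ℤ) * v)) ^ (p ^ k) = 1 := by
        rw [← zpow_natCast, ← zpow_mul]
        have h1 : (m : ℤ) * v * ((p ^ k : ℕ) : ℤ) = (orderOf a : ℤ) * v := by
          rw [← hmn]; push_cast; ring
        rw [h1, zpow_mul, zpow_natCast, pow_orderOf_eq_one, one_zpow]
      have := orderOf_dvd_of_pow_eq_one hpow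
      obtain ⟨j, -, hj⟩ := (Nat.dvd_prime_pow hp).mp this
      exact ⟨j, hj⟩
    · refine Subgroup.mul_mem _ (Subgroup.mem_sup_left ?_) (Subgroup.mem_sup_right hh)
      rw [hAp']
      refine ⟨A.zpow_mem ha _, ?_⟩
      have hpow : (a ^ ((p : ℤ) ^ k * u)) ^ m = 1 := by
        rw [← zpow_natCast, ← zpow_mul]
        have h1 : (p : ℤ) ^ k * u * (m : ℤ) = (orderOf a : ℤ) * u := by
          rw [← hmn]; push_cast; ring
        rw [h1, zpow_mul, zpow_natCast, pow_orderOf_eq_one, one_zpow]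
      intro hdvd
      exact hpm (hdvd.trans (orderOf_dvd_of_pow_eq_one hpow))
    · rw [← mul_assoc, ← hsplit]
  · -- characteristic complement conjugacy
    intro φ
    obtain ⟨x, hx⟩ := hcc φ
    refine ⟨x, ?_⟩
    have hAp'fix : Ap'.map φ.toMonoidHom = Ap' := by
      conv_lhs => rw [← hAp'char.fixed φ]
      rw [Subgroup.map_comap_eq_self_of_surjective φ.surjective]
    have hAp'conj : Ap'.map (MulAut.conj x).toMonoidHom = Ap' := by
      conv_lhs => rw [← hAp'char.fixed (MulAut.conj x)]
      rw [Subgroup.map_comap_eq_self_of_surjective (MulAut.conj x).surjective]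
    rw [Subgroup.map_sup, Subgroup.map_sup, hAp'fix, hAp'conj, hx]
end
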